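/- arXiv:2602.08845 — 4 statements merged into one kernel-verified Lean document; each statement's English description precedes it below -/
import Mathlib

section
/- (Lemma 2) Let f : ℝ^m → ℝ^m be continuous with f(0) = 0, and suppose solutions of ẋ = f(x) exist and are unique in forward time. Suppose f = f_H + f_NH where: f_H is continuous and (r, l_r)-homogeneous with homogeneity degree l_r < 0; the origin of ẋ = f_H(x) is asymptotically stable; f_NH is continuous with f_NH(0) = 0; and for every j ∈ {1,…,m}, lim_{ε→0⁺} ε^{−(l_r + r_j)} f_{NH,j}(Δ_ε^r x) = 0 uniformly with respect to x in the unit sphere of ℝ^m. If, in addition, the origin of ẋ = f(x) is globally asymptotically stable, then the origin of ẋ = f(x) is globally finite-time stable. -/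
/-!
Let `N x = ∑ j, |x j| ^ (1 / r j)`, so that `N (Δ_ε x) = ε N x`. Blowing up a trajectory of
`ẋ = f(x)` by `x = Δ_ρ w`, `t = ρ^(-l) s` turns `f` into `f_H` plus a remainder that tends to `0`
uniformly on `{N ≤ 1}` as `ρ → 0`. By homogeneity and a compactness argument (Arzelà–Ascoli along
an ultrafilter), every solution of `ẏ = f_H(y)` with `N (y 0) ≤ 1` satisfies `N y < 1/2` after a
fixed time `T`. Passing to the limit along blown-up trajectories, the same holds for `ẋ = f(x)`
near the origin: once `N x ≤ ρ` with `ρ` small, `N x ≤ ρ / 2` after a further time `T ρ^(-l)`.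
As `l < 0` these times form a convergent geometric series, so every trajectory, which enters any
`{N ≤ ρ}` by global asymptotic stability, reaches the origin in finite time.
-/

open Filter Topology Set

section Solutions

variable {E : Type*} [NormedAddCommGroup E] [NormedSpace ℝ E]

def IsForwardSolution (g : E → E) (y : ℝ → E) : Prop :=
  ∀ t, 0 ≤ t → HasDerivAt y (g (y t)) t

def IsLyapunovStable (g : E → E) : Prop :=
  ∀ ε > 0, ∃ δ > 0, ∀ y, IsForwardSolution g y → ‖y 0‖ < δ → ∀ t, 0 ≤ t → ‖y t‖ < ε

def IsLocallyAttractive (g : E → E) : Prop :=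
  ∃ δ > 0, ∀ y, IsForwardSolution g y → ‖y 0‖ < δ → Tendsto y atTop (𝓝 0)

lemma IsForwardSolution.comp_const_add {g : E → E} {y : ℝ → E} (hy : IsForwardSolution g y)
    {b : ℝ} (hb : 0 ≤ b) : IsForwardSolution g fun t => y (b + t) :=
  fun t ht => (hy (b + t) (by linarith)).comp_const_add b t

end Solutions

section Dilation

variable {m : ℕ} {r : Fin m → ℝ}

noncomputable def dilation (r : Fin m → ℝ) (ε : ℝ) : (Fin m → ℝ) →L[ℝ] (Fin m → ℝ) :=
  ContinuousLinearMap.pi fun i => ε ^ r i • ContinuousLinearMap.proj i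

@[simp]
lemma dilation_apply (ε : ℝ) (x : Fin m → ℝ) (i : Fin m) : dilation r ε x i = ε ^ r i * x i :=
  rfl

lemma dilation_dilation {ε δ : ℝ} (hε : 0 ≤ ε) (hδ : 0 ≤ δ) (x : Fin m → ℝ) :
    dilation r ε (dilation r δ x) = dilation r (ε * δ) x := by
  ext i
  simp [Real.mul_rpow hε hδ, mul_assoc]

lemma dilation_inv_dilation {ε : ℝ} (hε : 0 < ε) (x : Fin m → ℝ) :
    dilation r ε⁻¹ (dilation r ε x) = x := by
  ext i
  rw [dilation_dilation (inv_nonneg.2 hε.le) hε.le, inv_mul_cancel₀ hε.ne']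
  simp

lemma dilation_dilation_inv {ε : ℝ} (hε : 0 < ε) (x : Fin m → ℝ) :
    dilation r ε (dilation r ε⁻¹ x) = x := by
  simpa using dilation_inv_dilation (r := r) (inv_pos.2 hε) x

noncomputable def homNorm (r : Fin m → ℝ) (x : Fin m → ℝ) : ℝ :=
  ∑ j, |x j| ^ (r j)⁻¹

lemma homNorm_nonneg (x : Fin m → ℝ) : 0 ≤ homNorm r x :=
  Finset.sum_nonneg fun j _ => by positivity

lemma rpow_inv_le_homNorm (x : Fin m → ℝ) (j : Fin m) : |x j| ^ (r j)⁻¹ ≤ homNorm r x :=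
  Finset.single_le_sum (f := fun i => |x i| ^ (r i)⁻¹) (fun i _ => by positivity)
    (Finset.mem_univ j)

lemma homNorm_zero (hr : ∀ j, 0 < r j) : homNorm r 0 = 0 :=
  Finset.sum_eq_zero fun j _ => by simp [Real.zero_rpow (inv_ne_zero (hr j).ne')]

lemma continuous_homNorm (hr : ∀ j, 0 < r j) : Continuous (homNorm r) :=
  continuous_finsetSum _ fun j _ =>
    (continuous_apply j).abs.rpow_const fun _ => Or.inr (inv_nonneg.2 (hr j).le)

lemma homNorm_dilation (hr : ∀ j, 0 < r j) {ε : ℝ} (hε : 0 ≤ ε) (x : Fin m → ℝ) :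
    homNorm r (dilation r ε x) = ε * homNorm r x := by
  simp only [homNorm, Finset.mul_sum, dilation_apply]
  refine Finset.sum_congr rfl fun j _ => ?_
  rw [abs_mul, abs_of_nonneg (by positivity), Real.mul_rpow (by positivity) (abs_nonneg _),
    ← Real.rpow_mul hε, mul_inv_cancel₀ (hr j).ne', Real.rpow_one]

lemma abs_le_homNorm_rpow (hr : ∀ j, 0 < r j) (x : Fin m → ℝ) (j : Fin m) :
    |x j| ≤ homNorm r x ^ r j := by
  calc |x j| = (|x j| ^ (r j)⁻¹) ^ r j := (Real.rpow_inv_rpow (abs_nonneg _) (hr j).ne').symm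
    _ ≤ homNorm r x ^ r j :=
      Real.rpow_le_rpow (by positivity) (rpow_inv_le_homNorm x j) (hr j).le

lemma eq_zero_of_homNorm_nonpos (hr : ∀ j, 0 < r j) {x : Fin m → ℝ} (hx : homNorm r x ≤ 0) :
    x = 0 := by
  ext j
  have := abs_le_homNorm_rpow hr x j
  rw [le_antisymm hx (homNorm_nonneg x), Real.zero_rpow (hr j).ne'] at this
  exact abs_nonpos_iff.1 this

lemma norm_le_one_of_homNorm_le_one (hr : ∀ j, 0 < r j) {x : Fin m → ℝ} (hx : homNorm r x ≤ 1) :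
    ‖x‖ ≤ 1 :=
  (pi_norm_le_iff_of_nonneg zero_le_one).2 fun j =>
    (abs_le_homNorm_rpow hr x j).trans (Real.rpow_le_one (homNorm_nonneg x) hx (hr j).le)

lemma isCompact_homNorm_le (hr : ∀ j, 0 < r j) (c : ℝ) :
    IsCompact {x : Fin m → ℝ | homNorm r x ≤ c} :=
  (isCompact_univ_pi fun j => isCompact_Icc (a := -c ^ r j) (b := c ^ r j)).of_isClosed_subset
    (isClosed_le (continuous_homNorm hr) continuous_const) fun x hx j _ =>
      abs_le.1 ((abs_le_homNorm_rpow hr x j).trans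
        (Real.rpow_le_rpow (homNorm_nonneg x) hx (hr j).le))

lemma nhds_basis_homNorm_lt (hr : ∀ j, 0 < r j) :
    (𝓝 (0 : Fin m → ℝ)).HasBasis (fun η : ℝ => 0 < η) fun η => {x | homNorm r x < η} := by
  have hcomap : comap (homNorm r) (𝓝 0) = 𝓝 0 := by
    refine le_antisymm ?_ ?_
    · rw [← tendsto_id', tendsto_pi_nhds]
      intro j
      have h := (tendsto_comap : Tendsto (homNorm r) (comap (homNorm r) (𝓝 0)) (𝓝 0)).rpow_const
        (p := r j) (Or.inr (hr j).le)
      rw [Real.zero_rpow (hr j).ne'] at h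
      exact squeeze_zero_norm (fun x => abs_le_homNorm_rpow hr x j) h
    · simpa [homNorm_zero hr] using ((continuous_homNorm hr).tendsto 0).le_comap
  rw [← hcomap]
  convert Metric.nhds_basis_ball.comap (homNorm r) using 2 with η
  ext x
  simp [abs_of_nonneg (homNorm_nonneg x)]

lemma exists_norm_dilation_inv_eq_one (hr : ∀ j, 0 < r j) {x : Fin m → ℝ} (hx : x ≠ 0) :
    ∃ θ, 0 < θ ∧ θ ≤ homNorm r x ∧ ‖dilation r θ⁻¹ x‖ = 1 := by
  obtain ⟨j, hj⟩ := Function.ne_iff.1 hx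
  set a := |x j| ^ (r j)⁻¹
  have ha : 0 < a := Real.rpow_pos_of_pos (abs_pos.2 hj) _
  have hax : a ≤ homNorm r x := rpow_inv_le_homNorm x j
  have hcont : ContinuousOn (fun θ : ℝ => ‖dilation r θ⁻¹ x‖) (Icc a (homNorm r x)) := by
    refine (continuousOn_pi.2 fun i => ?_).norm
    simp only [dilation_apply]
    exact ((continuousOn_inv₀.mono fun θ hθ => (ha.trans_le hθ.1).ne').rpow_const
      fun _ _ => Or.inr (hr i).le).mul continuousOn_const
  have hupper : ‖dilation r (homNorm r x)⁻¹ x‖ ≤ 1 := by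
    refine norm_le_one_of_homNorm_le_one hr ?_
    rw [homNorm_dilation hr (inv_nonneg.2 (ha.trans_le hax).le),
      inv_mul_cancel₀ (ha.trans_le hax).ne']
  have hlower : 1 ≤ ‖dilation r a⁻¹ x‖ := by
    have hxj : a ^ r j = |x j| := Real.rpow_inv_rpow (abs_nonneg _) (hr j).ne'
    refine le_of_eq_of_le ?_ (norm_le_pi_norm _ j)
    rw [dilation_apply, Real.norm_eq_abs, abs_mul, abs_of_nonneg (by positivity),
      Real.inv_rpow ha.le, hxj, inv_mul_cancel₀ (abs_pos.2 hj).ne']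
  obtain ⟨θ, hθ, hθx⟩ := intermediate_value_Icc' hax hcont ⟨hupper, hlower⟩
  exact ⟨θ, ha.trans_le hθ.1, hθ.2, hθx⟩

end Dilation

section Rescaling

variable {m : ℕ} {r : Fin m → ℝ} {l : ℝ}

def IsHomogeneous (r : Fin m → ℝ) (l : ℝ) (g : (Fin m → ℝ) → (Fin m → ℝ)) : Prop :=
  ∀ ε > 0, ∀ x, g (dilation r ε x) = ε ^ l • dilation r ε (g x)

/-- The vector field `g` in the coordinates `x = Δ_ρ w`, `t = ρ^(-l) s`. -/
noncomputable def rescale (r : Fin m → ℝ) (l : ℝ) (g : (Fin m → ℝ) → (Fin m → ℝ)) (ρ : ℝ)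
    (w : Fin m → ℝ) : Fin m → ℝ :=
  ρ ^ (-l) • dilation r ρ⁻¹ (g (dilation r ρ w))

noncomputable def rescaleCurve (r : Fin m → ℝ) (l ρ : ℝ) (y : ℝ → Fin m → ℝ) (s : ℝ) :
    Fin m → ℝ :=
  dilation r ρ⁻¹ (y (ρ ^ (-l) * s))

lemma IsHomogeneous.rescale_eq {g : (Fin m → ℝ) → (Fin m → ℝ)} (hg : IsHomogeneous r l g)
    {ρ : ℝ} (hρ : 0 < ρ) : rescale r l g ρ = g := by
  ext1 w
  rw [rescale, hg ρ hρ, map_smul, dilation_inv_dilation hρ, smul_smul,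
    ← Real.rpow_add hρ, neg_add_cancel, Real.rpow_zero, one_smul]

lemma rescale_add (g₁ g₂ : (Fin m → ℝ) → (Fin m → ℝ)) (ρ : ℝ) :
    rescale r l (g₁ + g₂) ρ = rescale r l g₁ ρ + rescale r l g₂ ρ := by
  ext1 w
  simp [rescale, smul_add]

lemma rescale_apply {g : (Fin m → ℝ) → (Fin m → ℝ)} {ρ : ℝ} (hρ : 0 < ρ) (w : Fin m → ℝ)
    (j : Fin m) : rescale r l g ρ w j = ρ ^ (-(l + r j)) * g (dilation r ρ w) j := by
  rw [rescale, Pi.smul_apply, dilation_apply, smul_eq_mul, ← mul_assoc, Real.inv_rpow hρ.le,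
    ← Real.rpow_neg hρ.le, ← Real.rpow_add hρ, neg_add]

lemma homNorm_rescaleCurve (hr : ∀ j, 0 < r j) {ρ : ℝ} (hρ : 0 < ρ) (y : ℝ → Fin m → ℝ)
    (s : ℝ) : homNorm r (rescaleCurve r l ρ y s) = ρ⁻¹ * homNorm r (y (ρ ^ (-l) * s)) :=
  homNorm_dilation hr (inv_nonneg.2 hρ.le) _

lemma rescaleCurve_rpow_mul {ρ : ℝ} (hρ : 0 < ρ) (y : ℝ → Fin m → ℝ) (t : ℝ) :
    rescaleCurve r l ρ y (ρ ^ l * t) = dilation r ρ⁻¹ (y t) := by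
  rw [rescaleCurve, ← mul_assoc, ← Real.rpow_add hρ, neg_add_cancel, Real.rpow_zero, one_mul]

lemma IsForwardSolution.rescaleCurve {g : (Fin m → ℝ) → (Fin m → ℝ)} {y : ℝ → Fin m → ℝ}
    (hy : IsForwardSolution g y) {ρ : ℝ} (hρ : 0 < ρ) :
    IsForwardSolution (rescale r l g ρ) (rescaleCurve r l ρ y) := by
  intro s hs
  have hc : 0 < ρ ^ (-l) := Real.rpow_pos_of_pos hρ _
  have h : HasDerivAt (_root_.rescaleCurve r l ρ y)
      (dilation r ρ⁻¹ ((ρ ^ (-l) * 1) • g (y (ρ ^ (-l) * s)))) s :=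
    (dilation r ρ⁻¹).hasFDerivAt.comp_hasDerivAt s
      ((hy _ (mul_nonneg hc.le hs)).scomp s ((hasDerivAt_id s).const_mul (ρ ^ (-l))))
  refine h.congr_deriv ?_
  simp [rescale, _root_.rescaleCurve, dilation_dilation_inv hρ]

lemma IsHomogeneous.isForwardSolution_rescaleCurve {g : (Fin m → ℝ) → (Fin m → ℝ)}
    (hg : IsHomogeneous r l g) {y : ℝ → Fin m → ℝ} (hy : IsForwardSolution g y) {ρ : ℝ}
    (hρ : 0 < ρ) : IsForwardSolution g (rescaleCurve r l ρ y) := by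
  simpa only [hg.rescale_eq hρ] using hy.rescaleCurve (r := r) (l := l) hρ

end Rescaling

section Compactness

lemma tendstoUniformlyOn_of_lipschitzOnWith {ι X α : Type*} [PseudoMetricSpace X]
    [PseudoMetricSpace α] {F : ι → X → α} {f : X → α} {l : Filter ι} {s : Set X} {K : NNReal}
    (hs : IsCompact s) (hF : ∀ i, LipschitzOnWith K (F i) s)
    (hlim : ∀ x ∈ s, Tendsto (F · x) l (𝓝 (f x))) : TendstoUniformlyOn F f l s := by
  have : CompactSpace s := isCompact_iff_compactSpace.1 hs
  have heq : Equicontinuous fun i => s.domRestrict (F i) :=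
    (LipschitzWith.uniformEquicontinuous _ K fun i => (hF i).to_restrict).equicontinuous
  rw [tendstoUniformlyOn_iff_tendstoUniformly_comp_coe]
  exact UniformFun.tendsto_iff_tendstoUniformly.1 <|
    (heq.tendsto_uniformFun_iff_pi l (s.domRestrict f)).2 (tendsto_pi_nhds.2 fun x => hlim x x.2)

variable {E : Type*} [NormedAddCommGroup E] [NormedSpace ℝ E] [CompleteSpace E]

theorem exists_isForwardSolution_of_approx {ι : Type*} (U : Ultrafilter ι) {g : E → E}
    (hg : Continuous g) {K : Set E} (hK : IsCompact K) {M : ℝ} {v D : ι → ℝ → E}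
    (hv : ∀ k, ∀ s, 0 ≤ s → HasDerivAt (v k) (D k s) s)
    (hvK : ∀ k, ∀ s, 0 ≤ s → v k s ∈ K) (hD : ∀ k, ∀ s, 0 ≤ s → ‖D k s‖ ≤ M)
    (happrox : ∀ ε > 0, ∀ᶠ k in U, ∀ s, 0 ≤ s → ‖D k s - g (v k s)‖ ≤ ε) :
    ∃ Y, IsForwardSolution g Y ∧
      ∀ s, 0 ≤ s → Y s ∈ K ∧ Tendsto (v · s) U (𝓝 (Y s)) := by
  have hlip : ∀ k, LipschitzOnWith M.toNNReal (v k) (Ici 0) := fun k =>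
    (convex_Ici 0).lipschitzOnWith_of_nnnorm_hasDerivWithin_le
      (fun s hs => (hv k s hs).hasDerivWithinAt) fun s hs => by
        rw [← norm_toNNReal]; exact Real.toNNReal_le_toNNReal (hD k s hs)
  -- `Y₀` is the pointwise limit, frozen for negative times
  set Y₀ : ℝ → E := fun s => limUnder (U : Filter ι) (v · (max s 0))
  have hY₀ : ∀ s, 0 ≤ s → Y₀ s ∈ K ∧ Tendsto (v · s) U (𝓝 (Y₀ s)) := by
    intro s hs
    obtain ⟨y, -, hy⟩ := hK.ultrafilter_le_nhds (U.map (v · s))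
      (le_principal_iff.2 (Ultrafilter.mem_map.2 (Eventually.of_forall fun k => hvK k s hs)))
    have hlim : Tendsto (v · s) U (𝓝 (Y₀ s)) := by
      simpa [Y₀, max_eq_left hs] using tendsto_nhds_limUnder ⟨y, hy⟩
    exact ⟨hK.isClosed.mem_of_tendsto hlim (Eventually.of_forall fun k => hvK k s hs), hlim⟩
  have hY₀lip : LipschitzWith M.toNNReal Y₀ := by
    refine LipschitzWith.of_dist_le_mul fun s t => ?_
    have hs := (hY₀ _ (le_max_right s 0)).2
    have ht := (hY₀ _ (le_max_right t 0)).2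
    have h := le_of_tendsto (hs.dist ht) (Eventually.of_forall fun k =>
      (hlip k).dist_le_mul _ (le_max_right s 0) _ (le_max_right t 0))
    refine (h.trans_eq' ?_).trans (mul_le_mul_of_nonneg_left ?_ (by positivity))
    · simp [Y₀]
    · simpa [Real.dist_eq] using abs_max_sub_max_le_abs s t 0
  have hgY₀ : Continuous fun s => g (Y₀ s) := hg.comp hY₀lip.continuous
  -- `Y₀ - ∫ g ∘ Y₀` is constant on `[0, ∞)`: it is a uniform limit of maps with small derivative
  have hint : ∀ S, 0 ≤ S → Y₀ S = Y₀ 0 + ∫ τ in (0)..S, g (Y₀ τ) := by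
    intro S hS
    refine (eq_of_forall_dist_le fun ε hε => ?_).symm
    set ε' := ε / (2 * (S + 1))
    have hε' : 0 < ε' := by positivity
    obtain ⟨δ, hδ, hgδ⟩ := Metric.uniformContinuousOn_iff.1
      (hK.uniformContinuousOn_of_continuous hg.continuousOn) ε' hε'
    have hunif := Metric.tendstoUniformlyOn_iff.1 (tendstoUniformlyOn_of_lipschitzOnWith
      (isCompact_Icc (a := 0) (b := S)) (fun k => (hlip k).mono Icc_subset_Ici_self)
      fun s hs => (hY₀ s hs.1).2) δ hδ
    have hsmall : ∀ᶠ k in U, ‖(v k S - ∫ τ in (0)..S, g (Y₀ τ)) - v k 0‖ ≤ ε := by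
      filter_upwards [hunif, happrox ε' hε'] with k hk happ
      have hderiv : ∀ s ∈ Icc 0 S, HasDerivWithinAt (fun s => v k s - ∫ τ in (0)..s, g (Y₀ τ))
          (D k s - g (Y₀ s)) (Icc 0 S) s := fun s hs =>
        ((hv k s hs.1).sub (hgY₀.integral_hasStrictDerivAt 0 s).hasDerivAt).hasDerivWithinAt
      have hbound : ∀ s ∈ Ico 0 S, ‖D k s - g (Y₀ s)‖ ≤ 2 * ε' := fun s hs => by
        have h1 := happ s hs.1
        have h2 := (hgδ _ (hvK k s hs.1) _ (hY₀ s hs.1).1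
          (by rw [dist_comm]; exact hk s (Ico_subset_Icc_self hs))).le
        rw [dist_eq_norm] at h2
        calc ‖D k s - g (Y₀ s)‖ = ‖(D k s - g (v k s)) + (g (v k s) - g (Y₀ s))‖ := by abel_nf
          _ ≤ 2 * ε' := (norm_add_le _ _).trans (by linarith)
      have h := norm_image_sub_le_of_norm_deriv_le_segment' hderiv hbound S ⟨hS, le_rfl⟩
      calc _ ≤ 2 * ε' * (S - 0) := by simpa using h
        _ = ε * (S / (S + 1)) := by simp only [ε']; field_simp; ring
        _ ≤ ε := mul_le_of_le_one_right hε.le ((div_le_one (by positivity)).2 (by linarith))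
    have hlim : Tendsto (fun k => (v k S - ∫ τ in (0)..S, g (Y₀ τ)) - v k 0) U
        (𝓝 ((Y₀ S - ∫ τ in (0)..S, g (Y₀ τ)) - Y₀ 0)) :=
      ((hY₀ S hS).2.sub tendsto_const_nhds).sub (hY₀ 0 le_rfl).2
    rw [dist_comm, dist_eq_norm]
    exact (congrArg norm (by abel)).trans_le (le_of_tendsto hlim.norm hsmall)
  refine ⟨fun t => Y₀ 0 + ∫ τ in (0)..t, g (Y₀ τ), fun t ht => ?_, fun s hs => ?_⟩
  · have h := ((hgY₀.integral_hasStrictDerivAt 0 t).hasDerivAt).const_add (Y₀ 0)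
    convert h using 2
    exact (hint t ht).symm
  · simpa only [← hint s hs] using hY₀ s hs

end Compactness

section HomogeneousSystem

variable {m : ℕ} {r : Fin m → ℝ} {l : ℝ} {g : (Fin m → ℝ) → (Fin m → ℝ)}

lemma IsHomogeneous.exists_homNorm_lt (hr : ∀ j, 0 < r j) (hg : IsHomogeneous r l g)
    (hstab : IsLyapunovStable g) :
    ∃ η > 0, ∀ y, IsForwardSolution g y → ∀ c > 0, homNorm r (y 0) < η * c →
      ∀ t, 0 ≤ t → homNorm r (y t) < c := by
  obtain ⟨ε, hε, hεsub⟩ :=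
    Metric.nhds_basis_ball.mem_iff.1 ((nhds_basis_homNorm_lt hr).mem_of_mem one_pos)
  obtain ⟨δ, hδ, hδstab⟩ := hstab ε hε
  obtain ⟨η, hη, hηsub⟩ :=
    (nhds_basis_homNorm_lt hr).mem_iff.1 (Metric.ball_mem_nhds (0 : Fin m → ℝ) hδ)
  refine ⟨η, hη, fun y hy c hc hy0 t ht => ?_⟩
  have hz := hg.isForwardSolution_rescaleCurve hy hc
  have hz0 : rescaleCurve r l c y 0 ∈ Metric.ball (0 : Fin m → ℝ) δ := by
    refine hηsub ?_
    simp only [mem_ofPred_eq, homNorm_rescaleCurve hr hc, mul_zero]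
    rwa [inv_mul_lt_iff₀ hc, mul_comm]
  have hzt := hεsub (mem_ball_zero_iff.2
    (hδstab _ hz (mem_ball_zero_iff.1 hz0) _ (by positivity : 0 ≤ c ^ l * t)))
  rwa [mem_ofPred_eq, rescaleCurve_rpow_mul hc, homNorm_dilation hr (inv_nonneg.2 hc.le),
    inv_mul_lt_iff₀ hc, mul_one] at hzt

lemma IsHomogeneous.tendsto_zero (hr : ∀ j, 0 < r j) (hg : IsHomogeneous r l g)
    (hattr : IsLocallyAttractive g) {y : ℝ → Fin m → ℝ} (hy : IsForwardSolution g y) :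
    Tendsto y atTop (𝓝 0) := by
  obtain ⟨δ, hδ, hδattr⟩ := hattr
  obtain ⟨η, hη, hηsub⟩ :=
    (nhds_basis_homNorm_lt hr).mem_iff.1 (Metric.ball_mem_nhds (0 : Fin m → ℝ) hδ)
  set c := 2 * (homNorm r (y 0) + 1) / η
  have hc : 0 < c := by have := homNorm_nonneg (r := r) (y 0); positivity
  have hz0 : rescaleCurve r l c y 0 ∈ Metric.ball (0 : Fin m → ℝ) δ := by
    refine hηsub ?_
    simp only [mem_ofPred_eq, homNorm_rescaleCurve hr hc, mul_zero]
    rw [inv_mul_lt_iff₀ hc]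
    have := homNorm_nonneg (r := r) (y 0)
    simp only [c]
    field_simp
    linarith
  have hz := hδattr _ (hg.isForwardSolution_rescaleCurve hy hc) (mem_ball_zero_iff.1 hz0)
  have hlim := ((dilation r c).continuous.tendsto 0).comp
    (hz.comp (tendsto_id.const_mul_atTop (Real.rpow_pos_of_pos hc l)))
  rw [map_zero] at hlim
  refine hlim.congr fun t => ?_
  simp [rescaleCurve_rpow_mul hc, dilation_dilation_inv hc]

theorem IsHomogeneous.exists_uniform_attraction_time (hr : ∀ j, 0 < r j)
    (hg : IsHomogeneous r l g) (hcont : Continuous g) (hstab : IsLyapunovStable g)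
    (hattr : IsLocallyAttractive g) :
    ∃ T ≥ 0, ∀ y, IsForwardSolution g y → homNorm r (y 0) ≤ 1 →
      ∀ t ≥ T, homNorm r (y t) < 1 / 2 := by
  obtain ⟨η, hη, hηstab⟩ := hg.exists_homNorm_lt hr hstab
  by_contra! hbad
  choose y hy hy0 t ht hyt using fun n : ℕ => hbad n n.cast_nonneg
  set U := Ultrafilter.of (atTop : Filter ℕ)
  have hK : ∀ n, ∀ s, 0 ≤ s → y n s ∈ {x | homNorm r x ≤ 2 / η} := fun n s hs =>
    (hηstab (y n) (hy n) (2 / η) (by positivity)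
      (by rw [mul_div_cancel₀ _ hη.ne']; linarith [hy0 n]) s hs).le
  obtain ⟨C, hC⟩ := (isCompact_homNorm_le hr (2 / η)).exists_bound_of_continuousOn
    hcont.continuousOn
  obtain ⟨Y, hY, hYlim⟩ := exists_isForwardSolution_of_approx U hcont
    (isCompact_homNorm_le hr (2 / η)) hy hK (fun n s hs => hC _ (hK n s hs))
    fun ε hε => Eventually.of_forall fun n s _ => by simpa using hε.le
  have hYs : ∀ᶠ s in atTop, homNorm r (Y s) < η / 2 := by
    have h := ((continuous_homNorm hr).tendsto 0).comp (hg.tendsto_zero hr hattr hY)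
    rw [Function.comp_def, homNorm_zero hr] at h
    exact h.eventually (gt_mem_nhds (half_pos hη))
  obtain ⟨s, hYs, hs⟩ := (hYs.and (eventually_ge_atTop 0)).exists
  have hclose : ∀ᶠ n in (U : Filter ℕ), homNorm r (y n s) < η / 2 ∧ s ≤ n :=
    ((((continuous_homNorm hr).tendsto _).comp (hYlim s hs).2).eventually (gt_mem_nhds hYs)).and
      (Ultrafilter.of_le _ (tendsto_natCast_atTop_atTop.eventually_ge_atTop s))
  obtain ⟨n, hn, hsn⟩ := hclose.exists
  have h := hηstab _ ((hy n).comp_const_add hs) (1 / 2) (by norm_num)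
    (by rwa [mul_one_div, add_zero])
    (t n - s) (by linarith [ht n])
  simp only [add_sub_cancel] at h
  linarith [hyt n]

end HomogeneousSystem

section PerturbedSystem

variable {m : ℕ} {r : Fin m → ℝ} {l : ℝ}

lemma eventually_norm_rescale_le {g : (Fin m → ℝ) → (Fin m → ℝ)} (hr : ∀ j, 0 < r j)
    (hcont : ContinuousAt g 0) (hg0 : g 0 = 0)
    (hvanish : ∀ j : Fin m, ∀ η : ℝ, 0 < η → ∃ ε₀ : ℝ, 0 < ε₀ ∧
      ∀ ε : ℝ, 0 < ε → ε < ε₀ → ∀ x : Fin m → ℝ, ‖x‖ = 1 →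
        |ε ^ (-(l + r j)) * g (dilation r ε x) j| < η)
    {η : ℝ} (hη : 0 < η) :
    ∀ᶠ ρ in 𝓝[>] 0, ∀ w, homNorm r w ≤ 1 → ‖rescale r l g ρ w‖ ≤ η := by
  suffices h : ∀ j, ∀ᶠ ρ in 𝓝[>] 0, ∀ w, homNorm r w ≤ 1 → |rescale r l g ρ w j| ≤ η from
    (eventually_all.2 h).mono fun ρ h w hw =>
      (pi_norm_le_iff_of_nonneg hη.le).2 fun j => h j w hw
  intro j
  rcases le_or_gt (l + r j) 0 with ha | ha
  · obtain ⟨η₁, hη₁, hsub⟩ := (nhds_basis_homNorm_lt hr).mem_iff.1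
      (hcont.preimage_mem_nhds (Metric.closedBall_mem_nhds (g 0) hη))
    filter_upwards [Ioo_mem_nhdsGT (lt_min one_pos hη₁)] with ρ hρ w hw
    have hp : homNorm r (dilation r ρ w) < η₁ := by
      rw [homNorm_dilation hr hρ.1.le]
      exact (mul_le_of_le_one_right hρ.1.le hw).trans_lt (hρ.2.trans_le (min_le_right 1 η₁))
    have hgp : ‖g (dilation r ρ w) j‖ ≤ η :=
      (norm_le_pi_norm _ j).trans (by simpa [hg0] using hsub hp)
    rw [rescale_apply hρ.1, abs_mul, abs_of_pos (Real.rpow_pos_of_pos hρ.1 _)]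
    exact (mul_le_mul (Real.rpow_le_one hρ.1.le (hρ.2.trans_le (min_le_left 1 η₁)).le
      (by linarith)) hgp (abs_nonneg _) zero_le_one).trans_eq (one_mul η)
  · obtain ⟨ε₀, hε₀, hvan⟩ := hvanish j η hη
    filter_upwards [Ioo_mem_nhdsGT hε₀] with ρ hρ w hw
    rcases eq_or_ne w 0 with rfl | hw0
    · simp [rescale_apply hρ.1, hg0, hη.le]
    -- write `w = Δ_θ u` with `‖u‖ = 1` and `θ ≤ 1`, and apply the vanishing condition at `ρ θ`
    obtain ⟨θ, hθ, hθw, hu⟩ := exists_norm_dilation_inv_eq_one hr hw0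
    have hθ1 : θ ≤ 1 := hθw.trans hw
    have hkey := (hvan (ρ * θ) (mul_pos hρ.1 hθ)
      ((mul_le_of_le_one_right hρ.1.le hθ1).trans_lt hρ.2) _ hu).le
    rw [← dilation_dilation hρ.1.le hθ.le, dilation_dilation_inv hθ] at hkey
    have hsplit : ρ ^ (-(l + r j)) = θ ^ (l + r j) * (ρ * θ) ^ (-(l + r j)) := by
      rw [Real.rpow_neg hρ.1.le, Real.rpow_neg (mul_nonneg hρ.1.le hθ.le),
        Real.mul_rpow hρ.1.le hθ.le]
      field_simp
    rw [rescale_apply hρ.1, hsplit, mul_assoc, abs_mul, abs_of_pos (Real.rpow_pos_of_pos hθ _)]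
    exact (mul_le_mul (Real.rpow_le_one hθ.le hθ1 ha.le) hkey (abs_nonneg _)
      zero_le_one).trans_eq (one_mul η)

theorem exists_uniform_halving_time {fH fNH : (Fin m → ℝ) → (Fin m → ℝ)} (hr : ∀ j, 0 < r j)
    (hH : Continuous fH) (hhom : IsHomogeneous r l fH) (hstab : IsLyapunovStable fH)
    (hattr : IsLocallyAttractive fH) (hNH : ContinuousAt fNH 0) (hNH0 : fNH 0 = 0)
    (hvanish : ∀ j : Fin m, ∀ η : ℝ, 0 < η → ∃ ε₀ : ℝ, 0 < ε₀ ∧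
      ∀ ε : ℝ, 0 < ε → ε < ε₀ → ∀ x : Fin m → ℝ, ‖x‖ = 1 →
        |ε ^ (-(l + r j)) * fNH (dilation r ε x) j| < η) :
    ∃ T ≥ 0, ∀ᶠ ρ in 𝓝[>] 0, ∀ x, IsForwardSolution (fH + fNH) x → ∀ t₀ ≥ 0,
      (∀ t ≥ t₀, homNorm r (x t) ≤ ρ) → ∀ t ≥ t₀ + T * ρ ^ (-l), homNorm r (x t) ≤ ρ / 2 := by
  obtain ⟨T, hT, hTattr⟩ := hhom.exists_uniform_attraction_time hr hH hstab hattr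
  obtain ⟨C, hC⟩ := (isCompact_homNorm_le hr 1).exists_bound_of_continuousOn hH.continuousOn
  refine ⟨T, hT, ?_⟩
  by_contra hbad
  rw [not_eventually] at hbad
  have hseq : ∀ n : ℕ, ∃ ρ > 0,
      (∀ w, homNorm r w ≤ 1 → ‖rescale r l fNH ρ w‖ ≤ 1 / (n + 1)) ∧
      ∃ x, IsForwardSolution (fH + fNH) x ∧ ∃ t₀ ≥ 0, (∀ t ≥ t₀, homNorm r (x t) ≤ ρ) ∧
        ∃ t ≥ t₀ + T * ρ ^ (-l), ρ / 2 < homNorm r (x t) := by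
    intro n
    obtain ⟨ρ, hnot, hsmall, hρ⟩ := (hbad.and_eventually
      ((eventually_norm_rescale_le hr hNH hNH0 hvanish Nat.one_div_pos_of_nat).and
        self_mem_nhdsWithin)).exists
    push Not at hnot
    exact ⟨ρ, hρ, hsmall, hnot⟩
  choose ρ hρ hsmall x hx t₀ ht₀ hxρ t ht hxt using hseq
  -- blow up the window of length `T * ρ n ^ (-l)` ending at `t n` to one of length `T`
  set b : ℕ → ℝ := fun n => t n - T * ρ n ^ (-l)
  set z : ℕ → ℝ → Fin m → ℝ := fun n => rescaleCurve r l (ρ n) fun s => x n (b n + s)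
  have hb : ∀ n, t₀ n ≤ b n := fun n => by linarith [ht n]
  have hz : ∀ n, IsForwardSolution (rescale r l (fH + fNH) (ρ n)) (z n) := fun n =>
    ((hx n).comp_const_add ((ht₀ n).trans (hb n))).rescaleCurve (hρ n)
  have hzK : ∀ n, ∀ s, 0 ≤ s → z n s ∈ {w | homNorm r w ≤ 1} := fun n s hs => by
    simp only [mem_ofPred_eq, z, homNorm_rescaleCurve hr (hρ n), inv_mul_le_iff₀ (hρ n), mul_one]
    exact hxρ n _ (by nlinarith [hb n, Real.rpow_pos_of_pos (hρ n) (-l)])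
  have hzT : ∀ n, 1 / 2 < homNorm r (z n T) := fun n => by
    simp only [z, homNorm_rescaleCurve hr (hρ n), b, sub_add_cancel, mul_comm (ρ n ^ (-l)) T]
    rw [lt_inv_mul_iff₀ (hρ n)]
    linarith [hxt n]
  have hD : ∀ n w, rescale r l (fH + fNH) (ρ n) w = fH w + rescale r l fNH (ρ n) w :=
    fun n w => by rw [rescale_add, hhom.rescale_eq (hρ n)]; rfl
  obtain ⟨Y, hY, hYlim⟩ := exists_isForwardSolution_of_approx (Ultrafilter.of atTop) hH
    (isCompact_homNorm_le hr 1) hz hzK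
    (fun n s hs => by
      rw [hD]
      exact (norm_add_le _ _).trans (add_le_add (hC _ (hzK n s hs))
        ((hsmall n _ (hzK n s hs)).trans
          (div_le_one_of_le₀ (by linarith [n.cast_nonneg (α := ℝ)]) (by positivity)))))
    fun ε hε => Ultrafilter.of_le _ <|
      (tendsto_one_div_add_atTop_nhds_zero_nat.eventually (eventually_le_nhds hε)).mono
        fun n hn s hs => by
          rw [hD, add_sub_cancel_left]
          exact (hsmall n _ (hzK n s hs)).trans hn
  have h1 := hTattr Y hY (hYlim 0 le_rfl).1 T le_rfl
  have h2 := ge_of_tendsto (((continuous_homNorm hr).tendsto _).comp (hYlim T hT).2)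
    (Eventually.of_forall fun n => (hzT n).le)
  linarith

end PerturbedSystem

lemma exists_forall_ge_nonpos_of_halving {φ : ℝ → ℝ} {a C : ℝ} (ha : 0 < a) (hC : 0 ≤ C)
    (hφ : Tendsto φ atTop (𝓝 0))
    (hhalf : ∀ᶠ ρ in 𝓝[>] 0, ∀ t₀ ≥ 0, (∀ t ≥ t₀, φ t ≤ ρ) →
      ∀ t ≥ t₀ + C * ρ ^ a, φ t ≤ ρ / 2) :
    ∃ S ≥ 0, ∀ t ≥ S, φ t ≤ 0 := by
  obtain ⟨b, hb, hhalf⟩ := (nhdsGT_basis 0).eventually_iff.1 hhalf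
  obtain ⟨t₁, ht₁⟩ := eventually_atTop.1 (hφ.eventually (eventually_le_nhds (half_pos hb)))
  set ρ₀ := b / 2
  set q : ℝ := (1 / 2) ^ a
  have hq : 0 < q := by positivity
  have hq1 : q < 1 := Real.rpow_lt_one (by norm_num) (by norm_num) ha
  -- the halving times form a geometric series with sum `K`
  set K := C * ρ₀ ^ a / (1 - q)
  have hK : 0 ≤ K := div_nonneg (by positivity) (by linarith)
  set t₂ := max t₁ 0
  have hstep : ∀ n : ℕ, ∀ t ≥ t₂ + K - K * q ^ n, φ t ≤ ρ₀ * (1 / 2) ^ n := by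
    intro n
    induction n with
    | zero =>
      intro t ht
      rw [pow_zero, mul_one, add_sub_cancel_right] at ht
      simpa using ht₁ t ((le_max_left t₁ 0).trans ht)
    | succ n ih =>
      intro t ht
      have hρ : ρ₀ * (1 / 2) ^ n ∈ Ioo 0 b := ⟨by positivity,
        (mul_le_of_le_one_right (by positivity) (pow_le_one₀ (by norm_num) (by norm_num))).trans_lt
          (half_lt_self hb)⟩
      have hpow : C * (ρ₀ * (1 / 2) ^ n) ^ a = K * q ^ n - K * q ^ (n + 1) := by
        rw [Real.mul_rpow (by positivity) (by positivity), ← Real.rpow_natCast,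
          ← Real.rpow_mul (by norm_num), mul_comm (n : ℝ), Real.rpow_mul (by norm_num),
          Real.rpow_natCast]
        have : 1 - q ≠ 0 := (sub_pos.2 hq1).ne'
        simp only [K, pow_succ]
        field_simp
        ring
      have hstart : 0 ≤ t₂ + K - K * q ^ n := by
        nlinarith [le_max_right t₁ 0, pow_le_one₀ hq.le hq1.le (n := n)]
      rw [pow_succ, ← mul_assoc, mul_one_div]
      exact hhalf hρ _ hstart ih t (by rw [hpow]; linarith)
  have hlim : Tendsto (fun n : ℕ => ρ₀ * (1 / 2) ^ n) atTop (𝓝 0) := by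
    simpa using (tendsto_pow_atTop_nhds_zero_of_lt_one (by norm_num) (by norm_num :
      (1 / 2 : ℝ) < 1)).const_mul ρ₀
  exact ⟨t₂ + K, by positivity, fun t ht => ge_of_tendsto' hlim fun n =>
    hstep n t (by nlinarith [pow_nonneg hq.le n])⟩

theorem stmt5_general (m : ℕ) (r : Fin m → ℝ) (hr : ∀ j, 0 < r j) (lr : ℝ) (hlr : lr < 0)
    (f fH fNH : (Fin m → ℝ) → (Fin m → ℝ))
    (hsplit : ∀ x, f x = fH x + fNH x)
    (hfH_cont : Continuous fH)
    (hfH_hom : ∀ ε : ℝ, 0 < ε → ∀ x : Fin m → ℝ, ∀ j,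
      fH (fun i => ε ^ r i * x i) j = ε ^ lr * (ε ^ r j * fH x j))
    -- the origin of `ẋ = f_H(x)` is (locally) asymptotically stable:
    (hfH_stab : ∀ ε : ℝ, 0 < ε → ∃ δ : ℝ, 0 < δ ∧
      ∀ y : ℝ → (Fin m → ℝ), (∀ t : ℝ, 0 ≤ t → HasDerivAt y (fH (y t)) t) →
        ‖y 0‖ < δ → ∀ t : ℝ, 0 ≤ t → ‖y t‖ < ε)
    (hfH_attr : ∃ δ : ℝ, 0 < δ ∧
      ∀ y : ℝ → (Fin m → ℝ), (∀ t : ℝ, 0 ≤ t → HasDerivAt y (fH (y t)) t) →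
        ‖y 0‖ < δ → Tendsto y atTop (𝓝 0))
    (hfNH_cont : Continuous fNH) (hfNH0 : fNH 0 = 0)
    -- vanishing condition, uniformly w.r.t. `x` on the unit sphere:
    (hvanish : ∀ j : Fin m, ∀ η : ℝ, 0 < η → ∃ ε₀ : ℝ, 0 < ε₀ ∧
      ∀ ε : ℝ, 0 < ε → ε < ε₀ → ∀ x : Fin m → ℝ, ‖x‖ = 1 →
        |ε ^ (-(lr + r j)) * fNH (fun i => ε ^ r i * x i) j| < η)
    -- the given flow of `ẋ = f(x)`: solutions exist and are unique in forward time
    (sol : (Fin m → ℝ) → ℝ → (Fin m → ℝ))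
    (hsol : ∀ x₀, ∀ t : ℝ, 0 ≤ t → HasDerivAt (sol x₀) (f (sol x₀ t)) t)
    -- the origin of `ẋ = f(x)` is globally asymptotically stable:
    (hGAS_stab : ∀ ε : ℝ, 0 < ε → ∃ δ : ℝ, 0 < δ ∧
      ∀ x₀ : Fin m → ℝ, ‖x₀‖ < δ → ∀ t : ℝ, 0 ≤ t → ‖sol x₀ t‖ < ε)
    (hGAS_attr : ∀ x₀ : Fin m → ℝ, Tendsto (sol x₀) atTop (𝓝 0)) :
    -- conclusion: global finite-time stability of the origin of `ẋ = f(x)`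
    (∀ ε : ℝ, 0 < ε → ∃ δ : ℝ, 0 < δ ∧
      ∀ x₀ : Fin m → ℝ, ‖x₀‖ < δ → ∀ t : ℝ, 0 ≤ t → ‖sol x₀ t‖ < ε) ∧
    (∀ x₀ : Fin m → ℝ, ∃ T : ℝ, 0 ≤ T ∧ ∀ t : ℝ, T ≤ t → sol x₀ t = 0) := by
  obtain rfl : f = fH + fNH := funext hsplit
  have hhom : IsHomogeneous r lr fH := fun ε hε x => by
    ext j
    simp only [Pi.smul_apply, smul_eq_mul, dilation_apply]
    exact hfH_hom ε hε x j
  obtain ⟨T, hT, hhalf⟩ := exists_uniform_halving_time hr hfH_cont hhom hfH_stab hfH_attr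
    hfNH_cont.continuousAt hfNH0 hvanish
  refine ⟨hGAS_stab, fun x₀ => ?_⟩
  have hφ : Tendsto (homNorm r ∘ sol x₀) atTop (𝓝 0) := by
    simpa [homNorm_zero hr] using ((continuous_homNorm hr).tendsto 0).comp (hGAS_attr x₀)
  obtain ⟨S, hS, hzero⟩ := exists_forall_ge_nonpos_of_halving (neg_pos.2 hlr) hT hφ
    (hhalf.mono fun ρ h => h _ (hsol x₀))
  exact ⟨S, hS, fun t ht => eq_zero_of_homNorm_nonpos hr (hzero t ht)⟩

/-- Lemma 2: if the system `ẋ = f(x)` admits a homogeneous approximation `f_H` of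
negative degree whose origin is asymptotically stable, the non-homogeneous remainder
satisfies the uniform vanishing condition, and the origin of `ẋ = f(x)` is globally
asymptotically stable, then the origin of `ẋ = f(x)` is globally finite-time stable. -/
theorem stmt5 (m : ℕ) (r : Fin m → ℝ) (hr : ∀ j, 0 < r j) (lr : ℝ) (hlr : lr < 0)
    (f fH fNH : (Fin m → ℝ) → (Fin m → ℝ))
    (hf_cont : Continuous f) (hf0 : f 0 = 0)
    (hsplit : ∀ x, f x = fH x + fNH x)
    (hfH_cont : Continuous fH)
    (hfH_hom : ∀ ε : ℝ, 0 < ε → ∀ x : Fin m → ℝ, ∀ j,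
      fH (fun i => ε ^ r i * x i) j = ε ^ lr * (ε ^ r j * fH x j))
    -- the origin of `ẋ = f_H(x)` is (locally) asymptotically stable:
    (hfH_stab : ∀ ε : ℝ, 0 < ε → ∃ δ : ℝ, 0 < δ ∧
      ∀ y : ℝ → (Fin m → ℝ), (∀ t : ℝ, 0 ≤ t → HasDerivAt y (fH (y t)) t) →
        ‖y 0‖ < δ → ∀ t : ℝ, 0 ≤ t → ‖y t‖ < ε)
    (hfH_attr : ∃ δ : ℝ, 0 < δ ∧
      ∀ y : ℝ → (Fin m → ℝ), (∀ t : ℝ, 0 ≤ t → HasDerivAt y (fH (y t)) t) →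
        ‖y 0‖ < δ → Tendsto y atTop (𝓝 0))
    (hfNH_cont : Continuous fNH) (hfNH0 : fNH 0 = 0)
    -- vanishing condition, uniformly w.r.t. `x` on the unit sphere:
    (hvanish : ∀ j : Fin m, ∀ η : ℝ, 0 < η → ∃ ε₀ : ℝ, 0 < ε₀ ∧
      ∀ ε : ℝ, 0 < ε → ε < ε₀ → ∀ x : Fin m → ℝ, ‖x‖ = 1 →
        |ε ^ (-(lr + r j)) * fNH (fun i => ε ^ r i * x i) j| < η)
    -- the given flow of `ẋ = f(x)`: solutions exist and are unique in forward time
    (sol : (Fin m → ℝ) → ℝ → (Fin m → ℝ))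
    (hsol0 : ∀ x₀, sol x₀ 0 = x₀)
    (hsol : ∀ x₀, ∀ t : ℝ, 0 ≤ t → HasDerivAt (sol x₀) (f (sol x₀ t)) t)
    (huniq : ∀ x₀, ∀ y : ℝ → (Fin m → ℝ), y 0 = x₀ →
      (∀ t : ℝ, 0 ≤ t → HasDerivAt y (f (y t)) t) → ∀ t : ℝ, 0 ≤ t → y t = sol x₀ t)
    -- the origin of `ẋ = f(x)` is globally asymptotically stable:
    (hGAS_stab : ∀ ε : ℝ, 0 < ε → ∃ δ : ℝ, 0 < δ ∧
      ∀ x₀ : Fin m → ℝ, ‖x₀‖ < δ → ∀ t : ℝ, 0 ≤ t → ‖sol x₀ t‖ < ε)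
    (hGAS_attr : ∀ x₀ : Fin m → ℝ, Tendsto (sol x₀) atTop (𝓝 0)) :
    -- conclusion: global finite-time stability of the origin of `ẋ = f(x)`
    (∀ ε : ℝ, 0 < ε → ∃ δ : ℝ, 0 < δ ∧
      ∀ x₀ : Fin m → ℝ, ‖x₀‖ < δ → ∀ t : ℝ, 0 ≤ t → ‖sol x₀ t‖ < ε) ∧
    (∀ x₀ : Fin m → ℝ, ∃ T : ℝ, 0 ≤ T ∧ ∀ t : ℝ, T ≤ t → sol x₀ t = 0) :=
  stmt5_general m r hr lr hlr f fH fNH hsplit hfH_cont hfH_hom hfH_stab hfH_attr hfNH_cont hfNH0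
    hvanish sol hsol hGAS_stab hGAS_attr
end

section
/- (Proposition 1, Conclusion A) Suppose (q_l, q_r) : [0,∞) → ℝⁿ × ℝⁿ is a twice continuously differentiable solution of the closed-loop equations M_i(q_i) q̈_i + C_i(q_i, q̇_i) q̇_i = f_i(t) − K_s ⌈q_i − q_j⌋^{p_U} − D_{si} ⌈q̇_i⌋^{p_F} for (i,j) ∈ {(l,r),(r,l)}, where the external forces f_i : [0,∞) → ℝⁿ are continuous and satisfy the passivity assumption A1 along the solution. Then the position error q_l − q_r and the velocities q̇_l, q̇_r are bounded on [0,∞). -/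
open Matrix intervalIntegral

/-- Signed power function: `⌈x⌋^p = |x|^p · sign(x)` with `sign 0 = 0`. -/
noncomputable def spow (p x : ℝ) : ℝ := |x| ^ p * Real.sign x

/-!
The closed loop is passive with respect to the energy
`V = ½ q̇_lᵀ M_l q̇_l + ½ q̇_rᵀ M_r q̇_r + K_s ∑_k |e_k|^(p_U+1) / (p_U+1)`, `e = q_l - q_r`.
By P3 the Coriolis terms do no work, the two coupling forces are opposite and their power is
exactly the rate of change of the coupling potential, and the damping `⌈q̇_i⌋^{p_F}` only
dissipates, so `V' ≤ q̇_lᵀ f_l + q̇_rᵀ f_r`. Integrating and using A1 gives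
`V t ≤ V 0 + κ_l + κ_r`, and the lower bound `m₁` on `M_i` turns this into bounds on the
velocities and on the position error.
-/

lemma spow_neg (p x : ℝ) : spow p (-x) = -spow p x := by
  simp only [spow, abs_neg, Real.sign_neg, mul_neg]

lemma mul_spow_self_nonneg (p x : ℝ) : 0 ≤ x * spow p x := by
  rw [spow, mul_left_comm, mul_comm x]
  exact mul_nonneg (Real.rpow_nonneg (abs_nonneg x) p) (Real.sign_mul_nonneg x)

lemma abs_rpow_sub_one_mul_self (p x : ℝ) : |x| ^ (p - 1) * x = spow p x := by
  rcases lt_trichotomy x 0 with hx | rfl | hx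
  · rw [spow, Real.sign_of_neg hx, Real.rpow_sub_one (abs_ne_zero.2 hx.ne), abs_of_neg hx]
    field_simp [hx.ne]
  · simp [spow]
  · rw [spow, Real.sign_of_pos hx, Real.rpow_sub_one (abs_ne_zero.2 hx.ne'), abs_of_pos hx]
    field_simp [hx.ne']

lemma hasDerivAt_abs_rpow_add_one_div {p : ℝ} (hp : 0 < p) (x : ℝ) :
    HasDerivAt (fun y => |y| ^ (p + 1) / (p + 1)) (spow p x) x := by
  refine ((hasDerivAt_abs_rpow x (by linarith : 1 < p + 1)).div_const (p + 1)).congr_deriv ?_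
  rw [mul_assoc, show p + 1 - 2 = p - 1 by ring, abs_rpow_sub_one_mul_self]
  field_simp

section
variable {ι : Type*} [Fintype ι]

noncomputable def couplingPotential (p : ℝ) (e : ι → ℝ) : ℝ := ∑ k, |e k| ^ (p + 1) / (p + 1)

lemma couplingPotential_nonneg {p : ℝ} (hp : 0 < p + 1) (e : ι → ℝ) :
    0 ≤ couplingPotential p e :=
  Finset.sum_nonneg fun _ _ => by positivity

lemma hasDerivAt_couplingPotential {p : ℝ} (hp : 0 < p) {e : ℝ → ι → ℝ} {e' : ι → ℝ} {t : ℝ}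
    (he : HasDerivAt e e' t) :
    HasDerivAt (fun s => couplingPotential p (e s)) ((fun k => spow p (e t k)) ⬝ᵥ e') t := by
  simp only [couplingPotential, dotProduct]
  exact HasDerivAt.fun_sum fun k _ =>
    (hasDerivAt_abs_rpow_add_one_div hp (e t k)).comp t (hasDerivAt_pi.1 he k)
      (h₂ := fun y => |y| ^ (p + 1) / (p + 1))

lemma norm_le_of_couplingPotential_le {p c : ℝ} (hp : 0 < p + 1) {e : ι → ℝ}
    (h : couplingPotential p e ≤ c) : ‖e‖ ≤ ((p + 1) * c) ^ (p + 1)⁻¹ := by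
  have hc : 0 ≤ c := (couplingPotential_nonneg hp e).trans h
  refine (pi_norm_le_iff_of_nonneg (by positivity)).2 fun k => ?_
  have hk : |e k| ^ (p + 1) ≤ (p + 1) * c := by
    rw [← div_le_iff₀' hp]
    exact (Finset.single_le_sum (f := fun k => |e k| ^ (p + 1) / (p + 1))
      (fun _ _ => by positivity) (Finset.mem_univ k)).trans h
  rw [Real.norm_eq_abs, ← Real.rpow_le_rpow_iff (abs_nonneg _) (by positivity) hp,
    ← Real.rpow_mul (by positivity), inv_mul_cancel₀ hp.ne', Real.rpow_one]
  exact hk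

lemma norm_le_sqrt_of_mul_dotProduct_self_le {m c : ℝ} (hm : 0 < m) {v : ι → ℝ}
    (h : m * (v ⬝ᵥ v) ≤ c) : ‖v‖ ≤ √(c / m) := by
  refine (pi_norm_le_iff_of_nonneg (Real.sqrt_nonneg _)).2 fun k => ?_
  have hk : v k ^ 2 ≤ v ⬝ᵥ v := by
    rw [sq]
    exact Finset.single_le_sum (f := fun k => v k * v k) (fun _ _ => mul_self_nonneg _)
      (Finset.mem_univ k)
  rw [Real.norm_eq_abs, ← Real.sqrt_sq_eq_abs]
  exact Real.sqrt_le_sqrt (hk.trans ((le_div_iff₀' hm).2 h))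

lemma norm_le_of_energy_le {m Ks p c : ℝ} (hm : 0 < m) (hKs : 0 < Ks) (hp : 0 < p + 1)
    {Ml Mr : Matrix ι ι ℝ} {vl vr e : ι → ℝ}
    (hMl : m * (vl ⬝ᵥ vl) ≤ vl ⬝ᵥ (Ml *ᵥ vl)) (hMr : m * (vr ⬝ᵥ vr) ≤ vr ⬝ᵥ (Mr *ᵥ vr))
    (hE : vl ⬝ᵥ (Ml *ᵥ vl) / 2 + vr ⬝ᵥ (Mr *ᵥ vr) / 2 + Ks * couplingPotential p e ≤ c) :
    let B := max √(2 * c / m) (((p + 1) * (c / Ks)) ^ (p + 1)⁻¹)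
    ‖e‖ ≤ B ∧ ‖vl‖ ≤ B ∧ ‖vr‖ ≤ B := by
  have hl : 0 ≤ m * (vl ⬝ᵥ vl) := mul_nonneg hm.le (by simpa using dotProduct_star_self_nonneg vl)
  have hr : 0 ≤ m * (vr ⬝ᵥ vr) := mul_nonneg hm.le (by simpa using dotProduct_star_self_nonneg vr)
  have hΦ := mul_nonneg hKs.le (couplingPotential_nonneg hp e)
  refine ⟨?_, ?_, ?_⟩
  · refine (norm_le_of_couplingPotential_le hp ((le_div_iff₀' hKs).2 ?_)).trans (le_max_right _ _)
    linarith
  · exact (norm_le_sqrt_of_mul_dotProduct_self_le hm (by linarith)).trans (le_max_left _ _)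
  · exact (norm_le_sqrt_of_mul_dotProduct_self_le hm (by linarith)).trans (le_max_left _ _)

lemma dotProduct_mulVec_self_eq_zero {S : Matrix ι ι ℝ} (hS : Sᵀ = -S) (v : ι → ℝ) :
    v ⬝ᵥ (S *ᵥ v) = 0 := by
  have : v ⬝ᵥ (S *ᵥ v) = -(v ⬝ᵥ (S *ᵥ v)) := calc
    v ⬝ᵥ (S *ᵥ v) = (Sᵀ *ᵥ v) ⬝ᵥ v := by rw [mulVec_transpose, dotProduct_mulVec]
    _ = -(v ⬝ᵥ (S *ᵥ v)) := by rw [hS, neg_mulVec, neg_dotProduct, dotProduct_comm]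
  linarith

lemma sum_mul_apply_single [DecidableEq ι] (L : (ι → ℝ) →L[ℝ] ℝ) (v : ι → ℝ) :
    ∑ k, v k * L (Pi.single k 1) = L v := by
  calc ∑ k, v k * L (Pi.single k 1) = ∑ k, L (Pi.single k (v k)) :=
        Finset.sum_congr rfl fun k _ => by
          rw [← smul_eq_mul, ← map_smul, ← Pi.single_smul', smul_eq_mul, mul_one]
    _ = L v := by rw [← map_sum, Finset.univ_sum_single]

lemma HasDerivAt.dotProduct_mulVec {u w : ℝ → ι → ℝ} {A : ℝ → Matrix ι ι ℝ}
    {u' w' : ι → ℝ} {A' : Matrix ι ι ℝ} {t : ℝ} (hu : HasDerivAt u u' t)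
    (hA : ∀ a b, HasDerivAt (fun s => A s a b) (A' a b) t) (hw : HasDerivAt w w' t) :
    HasDerivAt (fun s => u s ⬝ᵥ (A s *ᵥ w s))
      (u' ⬝ᵥ (A t *ᵥ w t) + u t ⬝ᵥ (A' *ᵥ w t) + u t ⬝ᵥ (A t *ᵥ w')) t := by
  have h : HasDerivAt (fun s => ∑ a, u s a * ∑ b, A s a b * w s b)
      (∑ a, (u' a * ∑ b, A t a b * w t b + u t a * ∑ b, (A' a b * w t b + A t a b * w' b))) t :=
    HasDerivAt.fun_sum fun a _ => (hasDerivAt_pi.1 hu a).mul <|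
      HasDerivAt.fun_sum fun b _ => (hA a b).mul (hasDerivAt_pi.1 hw b)
  refine h.congr_deriv ?_
  simp only [dotProduct, mulVec, mul_add, Finset.sum_add_distrib, Finset.mul_sum]
  ring

lemma hasDerivAt_kineticEnergy [DecidableEq ι] {M : (ι → ℝ) → Matrix ι ι ℝ}
    {C : (ι → ℝ) → (ι → ℝ) → Matrix ι ι ℝ}
    (hM : ∀ a b, Differentiable ℝ fun q => M q a b) (hMsymm : ∀ q, (M q)ᵀ = M q)
    (hP3 : ∀ q v : ι → ℝ, ∀ a b : ι,
      ((∑ k, v k * fderiv ℝ (fun q' => M q' a b) q (Pi.single k 1)) - 2 * C q v a b)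
        = -((∑ k, v k * fderiv ℝ (fun q' => M q' b a) q (Pi.single k 1)) - 2 * C q v b a))
    {q v : ℝ → ι → ℝ} {a : ι → ℝ} {t : ℝ} (hq : HasDerivAt q (v t) t) (hv : HasDerivAt v a t) :
    HasDerivAt (fun s => v s ⬝ᵥ (M (q s) *ᵥ v s) / 2)
      (v t ⬝ᵥ (M (q t) *ᵥ a + C (q t) (v t) *ᵥ v t)) t := by
  set Mdot : Matrix ι ι ℝ := Matrix.of fun a b => fderiv ℝ (fun q' => M q' a b) (q t) (v t)
  have hMdot : ∀ a b, HasDerivAt (fun s => M (q s) a b) (Mdot a b) t := fun a b =>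
    ((hM a b) (q t)).hasFDerivAt.comp_hasDerivAt t hq
  have hskew : (Mdot - (2 : ℝ) • C (q t) (v t))ᵀ = -(Mdot - (2 : ℝ) • C (q t) (v t)) := by
    ext a b
    simpa [Mdot, sum_mul_apply_single] using hP3 (q t) (v t) b a
  have hsymm : a ⬝ᵥ (M (q t) *ᵥ v t) = v t ⬝ᵥ (M (q t) *ᵥ a) := by
    rw [dotProduct_mulVec, ← mulVec_transpose, hMsymm, dotProduct_comm]
  have hzero := dotProduct_mulVec_self_eq_zero hskew (v t)
  rw [sub_mulVec, dotProduct_sub, smul_mulVec, dotProduct_smul, smul_eq_mul] at hzero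
  refine ((hv.dotProduct_mulVec hMdot hv).div_const 2).congr_deriv ?_
  rw [hsymm, dotProduct_add]
  linarith

lemma closedLoop_power_le {Ks Dl Dr p p' : ℝ} (hDl : 0 ≤ Dl) (hDr : 0 ≤ Dr)
    (ql qr vl vr fl fr : ι → ℝ) :
    vl ⬝ᵥ (fun k => fl k - Ks * spow p (ql k - qr k) - Dl * spow p' (vl k))
      + vr ⬝ᵥ (fun k => fr k - Ks * spow p (qr k - ql k) - Dr * spow p' (vr k))
      + Ks * ((fun k => spow p ((ql - qr) k)) ⬝ᵥ (vl - vr)) ≤ vl ⬝ᵥ fl + vr ⬝ᵥ fr := by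
  simp only [dotProduct, Pi.sub_apply, Finset.mul_sum, ← Finset.sum_add_distrib]
  refine Finset.sum_le_sum fun k _ => ?_
  rw [← neg_sub (ql k), spow_neg]
  nlinarith [mul_nonneg hDl (mul_spow_self_nonneg p' (vl k)),
    mul_nonneg hDr (mul_spow_self_nonneg p' (vr k))]

lemma ContinuousOn.dotProduct {s : Set ℝ} {v w : ℝ → ι → ℝ} (hv : ContinuousOn v s)
    (hw : ContinuousOn w s) : ContinuousOn (fun t => v t ⬝ᵥ w t) s :=
  (continuous_fst.dotProduct continuous_snd).comp_continuousOn (hv.prodMk hw)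

end

theorem le_add_of_hasDerivAt_le_of_integral_le {V V' g : ℝ → ℝ} {κ : ℝ}
    (hg : ContinuousOn g (Set.Ici 0)) (hV : ∀ t, 0 ≤ t → HasDerivAt V (V' t) t)
    (hV' : ∀ t, 0 ≤ t → V' t ≤ g t) (hκ : ∀ t, 0 ≤ t → ∫ σ in (0:ℝ)..t, g σ ≤ κ)
    {t : ℝ} (ht : 0 ≤ t) : V t ≤ V 0 + κ := by
  -- clamped at 0, the integrand is continuous on all of `ℝ`, so FTC applies also at `t = 0`
  set G : ℝ → ℝ := fun σ => g (max σ 0)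
  have hG : Continuous G :=
    hg.comp_continuous (continuous_id.max continuous_const) fun σ => le_max_right σ 0
  have hGg : ∫ σ in (0:ℝ)..t, G σ = ∫ σ in (0:ℝ)..t, g σ :=
    integral_congr fun σ hσ => by
      rw [Set.uIcc_of_le ht] at hσ
      simp only [G, max_eq_left hσ.1]
  have hanti : AntitoneOn (fun s => V s - ∫ σ in (0:ℝ)..s, G σ) (Set.Ici 0) := by
    have hE : ∀ s, 0 ≤ s → HasDerivAt (fun s => V s - ∫ σ in (0:ℝ)..s, G σ) (V' s - G s) s :=
      fun s hs => (hV s hs).sub (hG.integral_hasStrictDerivAt 0 s).hasDerivAt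
    refine antitoneOn_of_hasDerivWithinAt_nonpos (convex_Ici 0)
      (fun s hs => (hE s hs).continuousAt.continuousWithinAt)
      (fun s hs => (hE s (interior_subset hs)).hasDerivWithinAt) fun s hs => ?_
    have hs : 0 ≤ s := interior_subset hs
    simp only [G, max_eq_left hs]
    linarith [hV' s hs]
  have := hanti Set.self_mem_Ici ht ht
  simp only [integral_same, sub_zero] at this
  linarith [hκ t ht]

theorem stmt7_general (n : ℕ)
    (Ml Mr : (Fin n → ℝ) → Matrix (Fin n) (Fin n) ℝ)
    (Cl Cr : (Fin n → ℝ) → (Fin n → ℝ) → Matrix (Fin n) (Fin n) ℝ)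
    -- Assumption A2
    (m1 m2 : ℝ) (hm1 : 0 < m1)
    (hMl_diff : ∀ a b : Fin n, ContDiff ℝ 1 fun q => Ml q a b)
    (hMr_diff : ∀ a b : Fin n, ContDiff ℝ 1 fun q => Mr q a b)
    (hMl_symm : ∀ q, (Ml q)ᵀ = Ml q) (hMr_symm : ∀ q, (Mr q)ᵀ = Mr q)
    (hMl_bnd : ∀ q x : Fin n → ℝ,
      m1 * (x ⬝ᵥ x) ≤ x ⬝ᵥ (Ml q *ᵥ x) ∧ x ⬝ᵥ (Ml q *ᵥ x) ≤ m2 * (x ⬝ᵥ x))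
    (hMr_bnd : ∀ q x : Fin n → ℝ,
      m1 * (x ⬝ᵥ x) ≤ x ⬝ᵥ (Mr q *ᵥ x) ∧ x ⬝ᵥ (Mr q *ᵥ x) ≤ m2 * (x ⬝ᵥ x))
    -- Property P3
    (hP3l : ∀ q v : Fin n → ℝ, ∀ a b : Fin n,
      ((∑ k, v k * fderiv ℝ (fun q' => Ml q' a b) q (Pi.single k 1)) - 2 * Cl q v a b)
        = -((∑ k, v k * fderiv ℝ (fun q' => Ml q' b a) q (Pi.single k 1)) - 2 * Cl q v b a))
    (hP3r : ∀ q v : Fin n → ℝ, ∀ a b : Fin n,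
      ((∑ k, v k * fderiv ℝ (fun q' => Mr q' a b) q (Pi.single k 1)) - 2 * Cr q v a b)
        = -((∑ k, v k * fderiv ℝ (fun q' => Mr q' b a) q (Pi.single k 1)) - 2 * Cr q v b a))
    -- homogeneity weights and control gains
    (r1 r2 : ℝ) (hr12 : r2 < r1) (hr1 : r1 < 2 * r2)
    (pU pF : ℝ) (hpU : pU = (2 * r2 - r1) / r1)
    (Ks Dsl Dsr : ℝ) (hKs : 0 < Ks) (hDsl : 0 < Dsl) (hDsr : 0 < Dsr)
    -- a twice continuously differentiable solution on [0,∞)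
    (ql qr vl vr al ar : ℝ → (Fin n → ℝ))
    (hql : ∀ t : ℝ, 0 ≤ t → HasDerivAt ql (vl t) t)
    (hqr : ∀ t : ℝ, 0 ≤ t → HasDerivAt qr (vr t) t)
    (hvl : ∀ t : ℝ, 0 ≤ t → HasDerivAt vl (al t) t)
    (hvr : ∀ t : ℝ, 0 ≤ t → HasDerivAt vr (ar t) t)
    -- continuous external forces satisfying Assumption A1 along the solution
    (fl fr : ℝ → (Fin n → ℝ)) (hfl : Continuous fl) (hfr : Continuous fr)
    (κl κr : ℝ)
    (hA1l : ∀ t : ℝ, 0 ≤ t → (∫ σ in (0:ℝ)..t, vl σ ⬝ᵥ fl σ) ≤ κl)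
    (hA1r : ∀ t : ℝ, 0 ≤ t → (∫ σ in (0:ℝ)..t, vr σ ⬝ᵥ fr σ) ≤ κr)
    -- the closed-loop equations
    (heql : ∀ t : ℝ, 0 ≤ t →
      Ml (ql t) *ᵥ al t + Cl (ql t) (vl t) *ᵥ vl t
        = fun k => fl t k - Ks * spow pU (ql t k - qr t k) - Dsl * spow pF (vl t k))
    (heqr : ∀ t : ℝ, 0 ≤ t →
      Mr (qr t) *ᵥ ar t + Cr (qr t) (vr t) *ᵥ vr t
        = fun k => fr t k - Ks * spow pU (qr t k - ql t k) - Dsr * spow pF (vr t k)) :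
    ∃ B : ℝ, ∀ t : ℝ, 0 ≤ t →
      ‖ql t - qr t‖ ≤ B ∧ ‖vl t‖ ≤ B ∧ ‖vr t‖ ≤ B := by
  have hpU0 : 0 < pU := hpU ▸ div_pos (by linarith) (by linarith)
  have hpower_cont : ∀ {v a f : ℝ → Fin n → ℝ}, (∀ t, 0 ≤ t → HasDerivAt v (a t) t) → Continuous f →
      ContinuousOn (fun s => v s ⬝ᵥ f s) (Set.Ici 0) := fun hv hf =>
    ContinuousOn.dotProduct (fun s hs => (hv s hs).continuousAt.continuousWithinAt) hf.continuousOn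
  obtain ⟨c, hc⟩ : ∃ c, ∀ t, 0 ≤ t → vl t ⬝ᵥ (Ml (ql t) *ᵥ vl t) / 2
      + vr t ⬝ᵥ (Mr (qr t) *ᵥ vr t) / 2 + Ks * couplingPotential pU (ql t - qr t) ≤ c := by
    refine ⟨_, fun t ht => le_add_of_hasDerivAt_le_of_integral_le (κ := κl + κr)
      ((hpower_cont hvl hfl).add (hpower_cont hvr hfr)) (fun s hs =>
        ((hasDerivAt_kineticEnergy (fun a b => (hMl_diff a b).differentiable one_ne_zero)
          hMl_symm hP3l (hql s hs) (hvl s hs)).add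
        (hasDerivAt_kineticEnergy (fun a b => (hMr_diff a b).differentiable one_ne_zero)
          hMr_symm hP3r (hqr s hs) (hvr s hs))).add
        ((hasDerivAt_couplingPotential hpU0 ((hql s hs).sub (hqr s hs))).const_mul Ks))
      (fun s hs => ?_) (fun s hs => ?_) ht⟩
    · rw [heql s hs, heqr s hs]
      exact closedLoop_power_le hDsl.le hDsr.le _ _ _ _ _ _
    · have hsub : Set.uIcc 0 s ⊆ Set.Ici 0 := by
        rw [Set.uIcc_of_le hs]; exact Set.Icc_subset_Ici_self
      simp only [Pi.add_apply]
      rw [integral_add ((hpower_cont hvl hfl).mono hsub).intervalIntegrable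
        ((hpower_cont hvr hfr).mono hsub).intervalIntegrable]
      exact add_le_add (hA1l s hs) (hA1r s hs)
  exact ⟨_, fun t ht => norm_le_of_energy_le hm1 hKs (by linarith) (hMl_bnd _ _).1
    (hMr_bnd _ _).1 (hc t ht)⟩

/-- Proposition 1, Conclusion A: boundedness of the position error and the
velocities for the state-feedback P+d controller C1 under passive external forces. -/
theorem stmt7 (n : ℕ)
    (Ml Mr : (Fin n → ℝ) → Matrix (Fin n) (Fin n) ℝ)
    (Cl Cr : (Fin n → ℝ) → (Fin n → ℝ) → Matrix (Fin n) (Fin n) ℝ)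
    -- Assumption A2
    (m1 m2 : ℝ) (hm1 : 0 < m1) (hm12 : m1 ≤ m2)
    (hMl_diff : ∀ a b : Fin n, ContDiff ℝ 1 fun q => Ml q a b)
    (hMr_diff : ∀ a b : Fin n, ContDiff ℝ 1 fun q => Mr q a b)
    (hMl_symm : ∀ q, (Ml q)ᵀ = Ml q) (hMr_symm : ∀ q, (Mr q)ᵀ = Mr q)
    (hMl_bnd : ∀ q x : Fin n → ℝ,
      m1 * (x ⬝ᵥ x) ≤ x ⬝ᵥ (Ml q *ᵥ x) ∧ x ⬝ᵥ (Ml q *ᵥ x) ≤ m2 * (x ⬝ᵥ x))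
    (hMr_bnd : ∀ q x : Fin n → ℝ,
      m1 * (x ⬝ᵥ x) ≤ x ⬝ᵥ (Mr q *ᵥ x) ∧ x ⬝ᵥ (Mr q *ᵥ x) ≤ m2 * (x ⬝ᵥ x))
    (hCl_cont : Continuous fun p : (Fin n → ℝ) × (Fin n → ℝ) => Cl p.1 p.2)
    (hCr_cont : Continuous fun p : (Fin n → ℝ) × (Fin n → ℝ) => Cr p.1 p.2)
    -- Property P3
    (hP3l : ∀ q v : Fin n → ℝ, ∀ a b : Fin n,
      ((∑ k, v k * fderiv ℝ (fun q' => Ml q' a b) q (Pi.single k 1)) - 2 * Cl q v a b)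
        = -((∑ k, v k * fderiv ℝ (fun q' => Ml q' b a) q (Pi.single k 1)) - 2 * Cl q v b a))
    (hP3r : ∀ q v : Fin n → ℝ, ∀ a b : Fin n,
      ((∑ k, v k * fderiv ℝ (fun q' => Mr q' a b) q (Pi.single k 1)) - 2 * Cr q v a b)
        = -((∑ k, v k * fderiv ℝ (fun q' => Mr q' b a) q (Pi.single k 1)) - 2 * Cr q v b a))
    -- homogeneity weights and control gains
    (r1 r2 : ℝ) (hr2 : 0 < r2) (hr12 : r2 < r1) (hr1 : r1 < 2 * r2)
    (pU pF : ℝ) (hpU : pU = (2 * r2 - r1) / r1) (hpF : pF = (2 * r2 - r1) / r2)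
    (Ks Dsl Dsr : ℝ) (hKs : 0 < Ks) (hDsl : 0 < Dsl) (hDsr : 0 < Dsr)
    -- a twice continuously differentiable solution on [0,∞)
    (ql qr vl vr al ar : ℝ → (Fin n → ℝ))
    (hql : ∀ t : ℝ, 0 ≤ t → HasDerivAt ql (vl t) t)
    (hqr : ∀ t : ℝ, 0 ≤ t → HasDerivAt qr (vr t) t)
    (hvl : ∀ t : ℝ, 0 ≤ t → HasDerivAt vl (al t) t)
    (hvr : ∀ t : ℝ, 0 ≤ t → HasDerivAt vr (ar t) t)
    (hal : ContinuousOn al (Set.Ici 0)) (har : ContinuousOn ar (Set.Ici 0))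
    -- continuous external forces satisfying Assumption A1 along the solution
    (fl fr : ℝ → (Fin n → ℝ)) (hfl : Continuous fl) (hfr : Continuous fr)
    (κl κr : ℝ) (hκl : 0 < κl) (hκr : 0 < κr)
    (hA1l : ∀ t : ℝ, 0 ≤ t → (∫ σ in (0:ℝ)..t, vl σ ⬝ᵥ fl σ) ≤ κl)
    (hA1r : ∀ t : ℝ, 0 ≤ t → (∫ σ in (0:ℝ)..t, vr σ ⬝ᵥ fr σ) ≤ κr)
    -- the closed-loop equations
    (heql : ∀ t : ℝ, 0 ≤ t →
      Ml (ql t) *ᵥ al t + Cl (ql t) (vl t) *ᵥ vl t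
        = fun k => fl t k - Ks * spow pU (ql t k - qr t k) - Dsl * spow pF (vl t k))
    (heqr : ∀ t : ℝ, 0 ≤ t →
      Mr (qr t) *ᵥ ar t + Cr (qr t) (vr t) *ᵥ vr t
        = fun k => fr t k - Ks * spow pU (qr t k - ql t k) - Dsr * spow pF (vr t k)) :
    ∃ B : ℝ, ∀ t : ℝ, 0 ≤ t →
      ‖ql t - qr t‖ ≤ B ∧ ‖vl t‖ ≤ B ∧ ‖vr t‖ ≤ B :=
  stmt7_general n Ml Mr Cl Cr m1 m2 hm1 hMl_diff hMr_diff hMl_symm hMr_symm hMl_bnd hMr_bnd hP3l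
    hP3r r1 r2 hr12 hr1 pU pF hpU Ks Dsl Dsr hKs hDsl hDsr ql qr vl vr al ar hql hqr hvl hvr fl fr
    hfl hfr κl κr hA1l hA1r heql heqr
end

section
/- Let A_l, A_r ∈ ℝ^{n×n} be fixed matrices, K_s, D_l, D_r > 0, and let the weights satisfy 2r₂ > r₁ > r₂ > 0 with p_U := (2r₂−r₁)/r₁ and p_F := (2r₂−r₁)/r₂. Then the vector field F on ℝ^{4n} defined by F(q̃_l, q̃_r, v_l, v_r) = ( v_l, v_r, −A_l (K_s ⌈q̃_l − q̃_r⌋^{p_U} + D_l ⌈v_l⌋^{p_F}), −A_r (K_s ⌈q̃_r − q̃_l⌋^{p_U} + D_r ⌈v_r⌋^{p_F}) ) is r-homogeneous of degree r₂ − r₁ < 0, where the weight of every component of q̃_l and q̃_r is r₁ and the weight of every component of v_l and v_r is r₂. -/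
open Matrix

/-- The dilation on `ℝ^{4n}` giving weight `r1` to the position blocks and
weight `r2` to the velocity blocks. -/
noncomputable def dil4 (n : ℕ) (r1 r2 ε : ℝ)
    (x : (Fin n → ℝ) × (Fin n → ℝ) × (Fin n → ℝ) × (Fin n → ℝ)) :
    (Fin n → ℝ) × (Fin n → ℝ) × (Fin n → ℝ) × (Fin n → ℝ) :=
  (ε ^ r1 • x.1, ε ^ r1 • x.2.1, ε ^ r2 • x.2.2.1, ε ^ r2 • x.2.2.2)

/-- The vector field of the homogeneous approximation of the closed loop with the
state-feedback P+d controller C1. -/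
noncomputable def FC1 (n : ℕ) (Al Ar : Matrix (Fin n) (Fin n) ℝ)
    (Ks Dl Dr pU pF : ℝ)
    (x : (Fin n → ℝ) × (Fin n → ℝ) × (Fin n → ℝ) × (Fin n → ℝ)) :
    (Fin n → ℝ) × (Fin n → ℝ) × (Fin n → ℝ) × (Fin n → ℝ) :=
  (x.2.2.1, x.2.2.2,
   -(Al *ᵥ fun k => Ks * spow pU (x.1 k - x.2.1 k) + Dl * spow pF (x.2.2.1 k)),
   -(Ar *ᵥ fun k => Ks * spow pU (x.2.1 k - x.1 k) + Dr * spow pF (x.2.2.2 k)))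

lemma spow_mul_pos (p c x : ℝ) (hc : 0 < c) : spow p (c * x) = c ^ p * spow p x := by
  unfold spow
  have hsign : Real.sign (c * x) = Real.sign x := by
    rcases lt_trichotomy x 0 with h | h | h
    · rw [Real.sign_of_neg h, Real.sign_of_neg (mul_neg_of_pos_of_neg hc h)]
    · simp [h]
    · rw [Real.sign_of_pos h, Real.sign_of_pos (mul_pos hc h)]
  rw [hsign, abs_mul, abs_of_pos hc, Real.mul_rpow hc.le (abs_nonneg x), mul_assoc]

theorem stmt15 (n : ℕ) (Al Ar : Matrix (Fin n) (Fin n) ℝ)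
    (Ks Dl Dr : ℝ) (hKs : 0 < Ks) (hDl : 0 < Dl) (hDr : 0 < Dr)
    (r1 r2 : ℝ) (hr2 : 0 < r2) (hr12 : r2 < r1) (hr1 : r1 < 2 * r2)
    (pU pF : ℝ) (hpU : pU = (2 * r2 - r1) / r1) (hpF : pF = (2 * r2 - r1) / r2) :
    r2 - r1 < 0 ∧
    ∀ ε : ℝ, 0 < ε →
      ∀ x : (Fin n → ℝ) × (Fin n → ℝ) × (Fin n → ℝ) × (Fin n → ℝ),
        FC1 n Al Ar Ks Dl Dr pU pF (dil4 n r1 r2 ε x)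
          = dil4 n r1 r2 ε (ε ^ (r2 - r1) • FC1 n Al Ar Ks Dl Dr pU pF x) := by
  have hr1pos : (0:ℝ) < r1 := hr2.trans hr12
  refine ⟨by linarith, fun ε hε x => ?_⟩
  have hε1 : (0:ℝ) < ε ^ r1 := Real.rpow_pos_of_pos hε r1
  have hε2 : (0:ℝ) < ε ^ r2 := Real.rpow_pos_of_pos hε r2
  have hU : r1 * pU = 2 * r2 - r1 := by rw [hpU]; field_simp
  have hF : r2 * pF = 2 * r2 - r1 := by rw [hpF]; field_simp
  have hpow1 : (ε ^ r1) ^ pU = ε ^ (2 * r2 - r1) := by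
    rw [← Real.rpow_mul hε.le, hU]
  have hpow2 : (ε ^ r2) ^ pF = ε ^ (2 * r2 - r1) := by
    rw [← Real.rpow_mul hε.le, hF]
  have key : ∀ (A : Matrix (Fin n) (Fin n) ℝ) (D : ℝ) (a b v : Fin n → ℝ),
      -(A *ᵥ fun k => Ks * spow pU (ε ^ r1 * a k - ε ^ r1 * b k) + D * spow pF (ε ^ r2 * v k))
        = ε ^ (2 * r2 - r1) • -(A *ᵥ fun k => Ks * spow pU (a k - b k) + D * spow pF (v k)) := by
    intro A D a b v
    rw [smul_neg, ← Matrix.mulVec_smul]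
    refine congrArg Neg.neg (congrArg _ (funext fun k => ?_))
    rw [Pi.smul_apply, smul_eq_mul]
    rw [← mul_sub, spow_mul_pos _ _ _ hε1, spow_mul_pos _ _ _ hε2, hpow1, hpow2]
    ring
  unfold FC1 dil4
  simp only [Prod.smul_mk, Prod.mk.injEq, Pi.smul_apply, smul_eq_mul]
  refine ⟨?_, ?_, ?_, ?_⟩
  · rw [smul_smul, ← Real.rpow_add hε]; congr 1; ring
  · rw [smul_smul, ← Real.rpow_add hε]; congr 1; ring
  · rw [key, smul_smul, ← Real.rpow_add hε]; congr 1; ring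
  · rw [key, smul_smul, ← Real.rpow_add hε]; congr 1; ring
end

section
/- Let M_l, M_r ∈ ℝ^{n×n} be symmetric positive definite matrices, K_s, D_l, D_r > 0, and let the weights satisfy 2r₂ > r₁ > r₂ > 0 with p_U := (2r₂−r₁)/r₁ and p_F := (2r₂−r₁)/r₂. Consider the system on ℝ^{3n}: ė = v_l − v_r, v̇_l = −M_l^{-1}(K_s ⌈e⌋^{p_U} + D_l ⌈v_l⌋^{p_F}), v̇_r = −M_r^{-1}(−K_s ⌈e⌋^{p_U} + D_r ⌈v_r⌋^{p_F}). Then the origin (e, v_l, v_r) = 0 is globally asymptotically stable; in particular, along any solution the function V = (K_s/(p_U+1)) ∑_{k=1}^n |e_k|^{p_U+1} + ½ v_lᵀ M_l v_l + ½ v_rᵀ M_r v_r is nonincreasing and every solution converges to the origin as t → ∞. -/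
open Matrix

/-- `(e, vl, vr)` is a forward solution of the homogeneous approximation of the
closed loop with the state-feedback P+d controller C1, in error coordinates. -/
noncomputable def IsSolHomC1 (n : ℕ) (Ml Mr : Matrix (Fin n) (Fin n) ℝ)
    (Ks Dl Dr pU pF : ℝ) (e vl vr : ℝ → (Fin n → ℝ)) : Prop :=
  (∀ t : ℝ, 0 ≤ t → HasDerivAt e (vl t - vr t) t) ∧
  (∀ t : ℝ, 0 ≤ t → HasDerivAt vl
    (-(Ml⁻¹ *ᵥ fun k => Ks * spow pU (e t k) + Dl * spow pF (vl t k))) t) ∧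
  (∀ t : ℝ, 0 ≤ t → HasDerivAt vr
    (-(Mr⁻¹ *ᵥ fun k => -(Ks * spow pU (e t k)) + Dr * spow pF (vr t k))) t)

/-!
`V` is the sum of the spring potential `K_s/(p_U+1) ∑ |e_k|^(p_U+1)` and the two kinetic
energies. Since `e · ⌈e⌋^p_U = |e|^(p_U+1)` componentwise, the spring terms cancel in `dV/dt`
along solutions, which is minus the dissipation `D_l ∑ |v_l,k|^(p_F+1) + D_r ∑ |v_r,k|^(p_F+1)`.
So `V` is nonincreasing, and Lyapunov's direct method gives stability.

For attractivity, the sublevel sets of `V` are compact, so a trajectory stays in a compact set,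
has bounded speed, and every continuous function of the state is uniformly continuous along it.
Barbalat's lemma applied to `V` then makes the dissipation tend to `0`, whence `v_l, v_r → 0`.
Applied to the momentum `M_l v_l`, whose derivative is `-(K_s ⌈e⌋^p_U + D_l ⌈v_l⌋^p_F)`, it
gives `⌈e⌋^p_U → 0`, whence `e → 0`.
-/

open Real Set Filter Topology

lemma Real.abs_mul_sign (x : ℝ) : |x| * Real.sign x = x := by
  rcases lt_trichotomy x 0 with hx | rfl | hx
  · rw [Real.sign_of_neg hx, abs_of_neg hx]; ring
  · simp
  · rw [Real.sign_of_pos hx, abs_of_pos hx, mul_one]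

lemma Real.mul_sign_self (x : ℝ) : x * Real.sign x = |x| := by
  rcases lt_trichotomy x 0 with hx | rfl | hx
  · rw [Real.sign_of_neg hx, abs_of_neg hx]; ring
  · simp
  · rw [Real.sign_of_pos hx, abs_of_pos hx, mul_one]

lemma Real.abs_sign_of_ne_zero {x : ℝ} (hx : x ≠ 0) : |Real.sign x| = 1 := by
  rcases Real.sign_apply_eq_of_ne_zero x hx with h | h <;> simp [h]

section SignedPower

variable {p : ℝ}

@[simp]
lemma spow_zero (p : ℝ) : spow p 0 = 0 := by simp [spow]

lemma abs_spow (hp : 0 < p) (x : ℝ) : |spow p x| = |x| ^ p := by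
  rcases eq_or_ne x 0 with rfl | hx
  · simp [zero_rpow hp.ne']
  · rw [spow, abs_mul, abs_of_nonneg (rpow_nonneg (abs_nonneg x) p), Real.abs_sign_of_ne_zero hx,
      mul_one]

lemma spow_eq_sub (hp : 0 < p) (x : ℝ) : spow p x = max x 0 ^ p - max (-x) 0 ^ p := by
  rcases lt_trichotomy x 0 with hx | rfl | hx
  · rw [spow, sign_of_neg hx, max_eq_right hx.le, max_eq_left (by linarith), zero_rpow hp.ne',
      abs_of_neg hx]
    ring
  · simp
  · rw [spow, sign_of_pos hx, max_eq_left hx.le, max_eq_right (by linarith), zero_rpow hp.ne',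
      abs_of_pos hx]
    ring

lemma continuous_spow (hp : 0 < p) : Continuous (spow p) := by
  rw [funext (spow_eq_sub hp)]
  exact ((continuous_id.max continuous_const).rpow_const fun _ => Or.inr hp.le).sub
    ((continuous_neg.max continuous_const).rpow_const fun _ => Or.inr hp.le)

lemma mul_spow (hp : p + 1 ≠ 0) (x : ℝ) : x * spow p x = |x| ^ (p + 1) := by
  rcases eq_or_ne x 0 with rfl | hx
  · simp [zero_rpow hp]
  · rw [spow, mul_left_comm, Real.mul_sign_self, rpow_add_one (abs_ne_zero.2 hx), mul_comm]

lemma hasDerivAt_abs_rpow_add_one (hp : 0 < p) (x : ℝ) :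
    HasDerivAt (fun y => |y| ^ (p + 1)) ((p + 1) * spow p x) x := by
  convert hasDerivAt_abs_rpow x (p := p + 1) (by linarith) using 1
  rcases eq_or_ne x 0 with rfl | hx
  · simp
  · have h : |x| ^ p = |x| ^ (p + 1 - 2) * |x| := by
      rw [← rpow_add_one (abs_ne_zero.2 hx)]; ring_nf
    rw [spow, h, mul_assoc, mul_assoc, Real.abs_mul_sign]

lemma tendsto_zero_of_tendsto_abs_rpow {α : Type*} {l : Filter α} {f : α → ℝ} (hp : 0 < p)
    (h : Tendsto (fun a => |f a| ^ p) l (𝓝 0)) : Tendsto f l (𝓝 0) := by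
  have hinv := ((continuousAt_rpow_const 0 p⁻¹ (Or.inr (inv_nonneg.2 hp.le))).tendsto.comp h)
  rw [zero_rpow (inv_ne_zero hp.ne')] at hinv
  refine (tendsto_zero_iff_abs_tendsto_zero f).2 (hinv.congr fun a => ?_)
  simp [← rpow_mul (abs_nonneg _), mul_inv_cancel₀ hp.ne']

lemma tendsto_zero_of_tendsto_spow {α : Type*} {l : Filter α} {f : α → ℝ} (hp : 0 < p)
    (h : Tendsto (fun a => spow p (f a)) l (𝓝 0)) : Tendsto f l (𝓝 0) :=
  tendsto_zero_of_tendsto_abs_rpow hp <| by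
    simpa only [Function.comp_def, abs_spow hp] using (tendsto_zero_iff_abs_tendsto_zero _).1 h

lemma hasDerivAt_sum_abs_rpow_add_one {ι : Type*} [Fintype ι] {p : ℝ} (hp : 0 < p)
    {v : ℝ → ι → ℝ} {v' : ι → ℝ} {t : ℝ} (hv : HasDerivAt v v' t) :
    HasDerivAt (fun s => ∑ k, |v s k| ^ (p + 1))
      ((p + 1) * ((fun k => spow p (v t k)) ⬝ᵥ v')) t := by
  refine (HasDerivAt.fun_sum fun k (_ : k ∈ Finset.univ) =>
    (hasDerivAt_abs_rpow_add_one hp (v t k)).comp t (hasDerivAt_pi.1 hv k)).congr_deriv ?_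
  simp only [dotProduct, Finset.mul_sum, mul_assoc]

end SignedPower

section Lyapunov

variable {E : Type*} [NormedAddCommGroup E]

lemma exists_pos_forall_sphere_le [ProperSpace E] {V : E → ℝ} (hV : Continuous V)
    (hpos : ∀ x ≠ 0, 0 < V x) {r : ℝ} (hr : 0 < r) :
    ∃ m > 0, ∀ x ∈ Metric.sphere (0 : E) r, m ≤ V x := by
  rcases (Metric.sphere (0 : E) r).eq_empty_or_nonempty with h | h
  · exact ⟨1, one_pos, by simp [h]⟩
  · obtain ⟨x₀, hx₀, hmin⟩ := (isCompact_sphere 0 r).exists_isMinOn h hV.continuousOn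
    exact ⟨V x₀, hpos x₀ (Metric.ne_of_mem_sphere hx₀ hr.ne'), fun x hx => hmin hx⟩

lemma lyapunov_stable [ProperSpace E] {V : E → ℝ} (hV : Continuous V) (hV0 : V 0 = 0)
    (hpos : ∀ x ≠ 0, 0 < V x) {ε : ℝ} (hε : 0 < ε) :
    ∃ δ > 0, ∀ x : ℝ → E, ContinuousOn x (Ici 0) → AntitoneOn (V ∘ x) (Ici 0) →
      ‖x 0‖ < δ → ∀ t, 0 ≤ t → ‖x t‖ < ε := by
  obtain ⟨m, hm, hmV⟩ := exists_pos_forall_sphere_le hV hpos hε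
  obtain ⟨δ, hδ, hVδ⟩ := Metric.continuousAt_iff.1 hV.continuousAt m hm
  refine ⟨min δ ε, lt_min hδ hε, fun x hxc hxV hx0 t ht => ?_⟩
  by_contra! hεt
  obtain ⟨τ, hτ, hxτ⟩ := intermediate_value_Icc ht (hxc.mono Icc_subset_Ici_self).norm
    ⟨(hx0.trans_le (min_le_right _ _)).le, hεt⟩
  have hV0_lt : V (x 0) < m := by
    have := hVδ (x := x 0) (by rw [dist_zero_right]; exact hx0.trans_le (min_le_left _ _))
    rw [hV0, Real.dist_eq, sub_zero] at this
    exact (le_abs_self _).trans_lt this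
  have hm_le : m ≤ V (x τ) := hmV _ (mem_sphere_zero_iff_norm.2 hxτ)
  have hVτ : V (x τ) ≤ V (x 0) := hxV self_mem_Ici hτ.1 hτ.1
  linarith

lemma AntitoneOn.exists_tendsto_atTop {f : ℝ → ℝ} {a : ℝ} (hf : AntitoneOn f (Ici a))
    (hb : BddBelow (f '' Ici a)) : ∃ L, Tendsto f atTop (𝓝 L) := by
  have hg : Antitone fun t => f (max a t) := fun s t hst =>
    hf (le_max_left a s) (le_max_left a t) (max_le_max le_rfl hst)
  have hgb : BddBelow (range fun t => f (max a t)) :=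
    hb.mono (range_subset_iff.2 fun t => mem_image_of_mem f (le_max_left a t))
  refine ⟨_, (tendsto_atTop_ciInf hg hgb).congr' ?_⟩
  filter_upwards [eventually_ge_atTop a] with t ht
  rw [max_eq_right ht]

variable [NormedSpace ℝ E]

/-- Barbalat's lemma. -/
lemma tendsto_deriv_zero_of_tendsto {f f' : ℝ → E} {L : E}
    (hf : ∀ t, 0 ≤ t → HasDerivAt f (f' t) t) (hL : Tendsto f atTop (𝓝 L))
    (hf' : UniformContinuousOn f' (Ici 0)) : Tendsto f' atTop (𝓝 0) := by
  rw [Metric.tendsto_atTop]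
  intro ε hε
  obtain ⟨δ, hδ, hclose⟩ := Metric.uniformContinuousOn_iff.1 hf' (ε / 2) (half_pos hε)
  obtain ⟨h, hh, hhδ⟩ : ∃ h : ℝ, 0 < h ∧ h < δ := ⟨δ / 2, half_pos hδ, half_lt_self hδ⟩
  have hinc : Tendsto (fun t => f (t + h) - f t) atTop (𝓝 0) := by
    simpa using (hL.comp (tendsto_atTop_add_const_right _ h tendsto_id)).sub hL
  obtain ⟨N, hN⟩ := Metric.tendsto_atTop.1 hinc (h * (ε / 2)) (by positivity)
  refine ⟨max N 0, fun t ht => ?_⟩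
  have ht0 : 0 ≤ t := (le_max_right _ _).trans ht
  have hmvt : ‖(f (t + h) - (t + h) • f' t) - (f t - t • f' t)‖ ≤ ε / 2 * ‖(t + h) - t‖ := by
    refine Convex.norm_image_sub_le_of_norm_hasDerivWithin_le
      (f := fun s => f s - s • f' t) (f' := fun s => f' s - f' t)
      (fun s hs => ?_) (fun s hs => ?_) (convex_Icc t (t + h))
      (left_mem_Icc.2 (by linarith)) (right_mem_Icc.2 (by linarith))
    · have := (hf s (ht0.trans hs.1)).sub ((hasDerivAt_id s).smul_const (f' t))
      rw [one_smul] at this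
      exact this.hasDerivWithinAt
    · rw [← dist_eq_norm]
      refine (hclose s (ht0.trans hs.1) t ht0 ?_).le
      rw [Real.dist_eq, abs_of_nonneg (by linarith [hs.1])]
      linarith [hs.2]
  have hrw : (f (t + h) - (t + h) • f' t) - (f t - t • f' t) = (f (t + h) - f t) - h • f' t := by
    rw [add_smul]; abel
  rw [hrw, add_sub_cancel_left, Real.norm_of_nonneg hh.le] at hmvt
  have hfinc : ‖f (t + h) - f t‖ < h * (ε / 2) := by
    simpa using hN t ((le_max_left _ _).trans ht)
  have hkey : h * ‖f' t‖ < h * ε := by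
    calc h * ‖f' t‖ = ‖h • f' t‖ := by rw [norm_smul, Real.norm_of_nonneg hh.le]
      _ ≤ ‖f (t + h) - f t‖ + ‖(f (t + h) - f t) - h • f' t‖ := norm_le_norm_add_norm_sub _ _
      _ < h * ε := by linarith
  simpa using lt_of_mul_lt_mul_left hkey hh.le

lemma uniformContinuousOn_of_hasDerivAt_of_mapsTo {F : E → E} (hF : Continuous F) {K : Set E}
    (hK : IsCompact K) {x : ℝ → E} (hx : ∀ t, 0 ≤ t → HasDerivAt x (F (x t)) t)
    (hxK : MapsTo x (Ici 0) K) : UniformContinuousOn x (Ici 0) := by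
  obtain ⟨C, hC⟩ := hK.exists_bound_of_continuousOn hF.continuousOn
  refine ((convex_Ici 0).lipschitzOnWith_of_nnnorm_hasDerivWithin_le (C := C.toNNReal)
    (fun t ht => (hx t ht).hasDerivWithinAt) fun t ht => ?_).uniformContinuousOn
  rw [← NNReal.coe_le_coe, coe_nnnorm]
  exact (hC _ (hxK ht)).trans (le_max_left _ _)

end Lyapunov

section QuadraticForm

variable {ι : Type*} [Fintype ι] {M : Matrix ι ι ℝ}

lemma Matrix.PosDef.exists_pos_mul_sq_norm_le (hM : M.PosDef) :
    ∃ c > 0, ∀ v : ι → ℝ, c * ‖v‖ ^ 2 ≤ v ⬝ᵥ M *ᵥ v := by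
  obtain ⟨c, hc, hsphere⟩ := exists_pos_forall_sphere_le (V := fun v : ι → ℝ => v ⬝ᵥ M *ᵥ v)
    (by fun_prop) (fun v hv => by simpa using hM.dotProduct_mulVec_pos hv) one_pos
  refine ⟨c, hc, fun v => ?_⟩
  rcases eq_or_ne v 0 with rfl | hv
  · simp
  have hnorm : 0 < ‖v‖ := norm_pos_iff.2 hv
  have h := hsphere (‖v‖⁻¹ • v) (by simp [norm_smul, hnorm.ne'])
  rw [mulVec_smul, smul_dotProduct, dotProduct_smul, smul_eq_mul, smul_eq_mul, ← mul_assoc,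
    ← sq, inv_pow, ← div_eq_inv_mul, le_div_iff₀ (by positivity)] at h
  exact h

lemma HasDerivAt.matrix_mulVec {m : Type*} [Fintype m] (A : Matrix m ι ℝ) {v : ℝ → ι → ℝ} {v' : ι → ℝ}
    {t : ℝ} (hv : HasDerivAt v v' t) : HasDerivAt (fun s => A *ᵥ v s) (A *ᵥ v') t :=
  A.mulVecLin.toContinuousLinearMap.hasFDerivAt.comp_hasDerivAt t hv

lemma hasDerivAt_dotProduct_mulVec_self (hM : Mᵀ = M) {v : ℝ → ι → ℝ} {v' : ι → ℝ} {t : ℝ}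
    (hv : HasDerivAt v v' t) :
    HasDerivAt (fun s => v s ⬝ᵥ M *ᵥ v s) (2 * (v t ⬝ᵥ M *ᵥ v')) t := by
  have hMv := hv.matrix_mulVec M
  have hsymm : v' ⬝ᵥ M *ᵥ v t = v t ⬝ᵥ M *ᵥ v' := by
    rw [dotProduct_mulVec, ← hM, vecMul_transpose, hM, dotProduct_comm]
  refine (HasDerivAt.fun_sum fun i (_ : i ∈ Finset.univ) =>
    (hasDerivAt_pi.1 hv i).fun_mul (hasDerivAt_pi.1 hMv i)).congr_deriv ?_
  rw [Finset.sum_add_distrib]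
  change v' ⬝ᵥ M *ᵥ v t + v t ⬝ᵥ M *ᵥ v' = _
  rw [hsymm]; ring

end QuadraticForm

abbrev PhaseSpace (n : ℕ) := (Fin n → ℝ) × (Fin n → ℝ) × (Fin n → ℝ)

noncomputable section System

variable {n : ℕ}

def forceL (Ks Dl pU pF : ℝ) (x : PhaseSpace n) : Fin n → ℝ :=
  fun k => Ks * spow pU (x.1 k) + Dl * spow pF (x.2.1 k)

def forceR (Ks Dr pU pF : ℝ) (x : PhaseSpace n) : Fin n → ℝ :=
  fun k => -(Ks * spow pU (x.1 k)) + Dr * spow pF (x.2.2 k)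

def vectorFieldC1 (Ml Mr : Matrix (Fin n) (Fin n) ℝ) (Ks Dl Dr pU pF : ℝ) (x : PhaseSpace n) :
    PhaseSpace n :=
  (x.2.1 - x.2.2, -(Ml⁻¹ *ᵥ forceL Ks Dl pU pF x), -(Mr⁻¹ *ᵥ forceR Ks Dr pU pF x))

def lyapunovFn (Ml Mr : Matrix (Fin n) (Fin n) ℝ) (Ks pU : ℝ) (x : PhaseSpace n) : ℝ :=
  (Ks / (pU + 1)) * (∑ k, |x.1 k| ^ (pU + 1))
    + (1 / 2 : ℝ) * (x.2.1 ⬝ᵥ (Ml *ᵥ x.2.1)) + (1 / 2 : ℝ) * (x.2.2 ⬝ᵥ (Mr *ᵥ x.2.2))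

def dissipation (Dl Dr pF : ℝ) (x : PhaseSpace n) : ℝ :=
  Dl * ∑ k, |x.2.1 k| ^ (pF + 1) + Dr * ∑ k, |x.2.2 k| ^ (pF + 1)

variable {Ml Mr : Matrix (Fin n) (Fin n) ℝ} {Ks Dl Dr pU pF : ℝ}

lemma continuous_forceL (hpU : 0 < pU) (hpF : 0 < pF) :
    Continuous (forceL (n := n) Ks Dl pU pF) := by
  have := continuous_spow hpU
  have := continuous_spow hpF
  unfold forceL
  fun_prop

lemma continuous_forceR (hpU : 0 < pU) (hpF : 0 < pF) :
    Continuous (forceR (n := n) Ks Dr pU pF) := by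
  have := continuous_spow hpU
  have := continuous_spow hpF
  unfold forceR
  fun_prop

lemma continuous_vectorFieldC1 (hpU : 0 < pU) (hpF : 0 < pF) :
    Continuous (vectorFieldC1 Ml Mr Ks Dl Dr pU pF) := by
  have hL := continuous_forceL (n := n) (Ks := Ks) (Dl := Dl) hpU hpF
  have hR := continuous_forceR (n := n) (Ks := Ks) (Dr := Dr) hpU hpF
  unfold vectorFieldC1
  fun_prop

lemma continuous_lyapunovFn (hpU : 0 < pU) : Continuous (lyapunovFn (n := n) Ml Mr Ks pU) := by
  have hq : 0 ≤ pU + 1 := by linarith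
  unfold lyapunovFn
  fun_prop (disch := exact hq)

lemma continuous_dissipation (hpF : 0 < pF) : Continuous (dissipation (n := n) Dl Dr pF) := by
  have hq : 0 ≤ pF + 1 := by linarith
  unfold dissipation
  fun_prop (disch := exact hq)

lemma lyapunovFn_zero (hpU : 0 < pU) : lyapunovFn Ml Mr Ks pU (0 : PhaseSpace n) = 0 := by
  simp [lyapunovFn, zero_rpow (by linarith : pU + 1 ≠ 0)]

lemma lyapunovFn_pos (hMl : Ml.PosDef) (hMr : Mr.PosDef) (hKs : 0 < Ks) (hpU : 0 < pU)
    {x : PhaseSpace n} (hx : x ≠ 0) : 0 < lyapunovFn Ml Mr Ks pU x := by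
  obtain ⟨e, vl, vr⟩ := x
  have hKs' : 0 < Ks / (pU + 1) := by positivity
  have he : 0 ≤ ∑ k, |e k| ^ (pU + 1) := by positivity
  have hvl : 0 ≤ vl ⬝ᵥ Ml *ᵥ vl := by simpa using hMl.posSemidef.dotProduct_mulVec_nonneg vl
  have hvr : 0 ≤ vr ⬝ᵥ Mr *ᵥ vr := by simpa using hMr.posSemidef.dotProduct_mulVec_nonneg vr
  simp only [lyapunovFn]
  by_cases he0 : e = 0
  · by_cases hvl0 : vl = 0
    · have hvr0 : vr ≠ 0 := by rintro rfl; exact hx (by simp [he0, hvl0])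
      have := hMr.dotProduct_mulVec_pos hvr0
      simp only [star_trivial] at this
      positivity
    · have := hMl.dotProduct_mulVec_pos hvl0
      simp only [star_trivial] at this
      positivity
  · obtain ⟨k, hk⟩ := Function.ne_iff.1 he0
    have : 0 < ∑ k, |e k| ^ (pU + 1) := Finset.sum_pos' (fun _ _ => by positivity)
      ⟨k, Finset.mem_univ k, by simpa using rpow_pos_of_pos (abs_pos.2 hk) (pU + 1)⟩
    positivity

lemma lyapunovFn_nonneg (hMl : Ml.PosDef) (hMr : Mr.PosDef) (hKs : 0 < Ks) (hpU : 0 < pU)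
    (x : PhaseSpace n) : 0 ≤ lyapunovFn Ml Mr Ks pU x := by
  rcases eq_or_ne x 0 with rfl | hx
  · rw [lyapunovFn_zero hpU]
  · exact (lyapunovFn_pos hMl hMr hKs hpU hx).le

lemma isCompact_setOf_lyapunovFn_le (hMl : Ml.PosDef) (hMr : Mr.PosDef) (hKs : 0 < Ks)
    (hpU : 0 < pU) (c : ℝ) : IsCompact {x : PhaseSpace n | lyapunovFn Ml Mr Ks pU x ≤ c} := by
  refine Metric.isCompact_of_isClosed_isBounded
    (isClosed_le (continuous_lyapunovFn hpU) continuous_const) ?_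
  obtain ⟨cl, hcl, hl⟩ := hMl.exists_pos_mul_sq_norm_le
  obtain ⟨cr, hcr, hr⟩ := hMr.exists_pos_mul_sq_norm_le
  set C := max c 0
  refine isBounded_iff_forall_norm_le.2
    ⟨max (((pU + 1) * C / Ks) ^ (pU + 1)⁻¹) (max √(2 * C / cl) √(2 * C / cr)), ?_⟩
  rintro ⟨e, vl, vr⟩ hx
  replace hx : lyapunovFn Ml Mr Ks pU (e, vl, vr) ≤ C := hx.trans (le_max_left c 0)
  have hC : 0 ≤ C := le_max_right c 0
  have he : ∀ k, |e k| ^ (pU + 1) ≤ ∑ j, |e j| ^ (pU + 1) := fun k =>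
    Finset.single_le_sum (f := fun j => |e j| ^ (pU + 1)) (fun _ _ => by positivity)
      (Finset.mem_univ k)
  have hsum : 0 ≤ ∑ k, |e k| ^ (pU + 1) := by positivity
  have hKs' : 0 < Ks / (pU + 1) := by positivity
  have hvl := hl vl
  have hvr := hr vr
  simp only [lyapunovFn] at hx
  refine norm_prod_le_iff.2 ⟨le_max_of_le_left ?_, norm_prod_le_iff.2
    ⟨le_max_of_le_right (le_max_of_le_left ?_), le_max_of_le_right (le_max_of_le_right ?_)⟩⟩
  · refine (pi_norm_le_iff_of_nonneg (by positivity)).2 fun k => ?_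
    rw [Real.norm_eq_abs, le_rpow_inv_iff_of_pos (abs_nonneg _) (by positivity) (by linarith),
      le_div_iff₀ hKs]
    have : Ks / (pU + 1) * ∑ j, |e j| ^ (pU + 1) ≤ C := by
      nlinarith [sq_nonneg ‖vl‖, sq_nonneg ‖vr‖]
    rw [div_mul_eq_mul_div, div_le_iff₀ (by linarith)] at this
    nlinarith [he k]
  · rw [Real.le_sqrt (norm_nonneg _) (by positivity), le_div_iff₀ hcl]
    nlinarith [sq_nonneg ‖vr‖]
  · rw [Real.le_sqrt (norm_nonneg _) (by positivity), le_div_iff₀ hcr]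
    nlinarith [sq_nonneg ‖vl‖]

lemma dissipation_nonneg (hDl : 0 ≤ Dl) (hDr : 0 ≤ Dr) (x : PhaseSpace n) :
    0 ≤ dissipation Dl Dr pF x := by
  unfold dissipation
  positivity

lemma mul_abs_rpow_le_dissipation_left (hDl : 0 ≤ Dl) (hDr : 0 ≤ Dr) (x : PhaseSpace n)
    (k : Fin n) : Dl * |x.2.1 k| ^ (pF + 1) ≤ dissipation Dl Dr pF x := by
  have := Finset.single_le_sum (f := fun j => |x.2.1 j| ^ (pF + 1)) (fun _ _ => by positivity)
    (Finset.mem_univ k)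
  have : 0 ≤ Dr * ∑ k, |x.2.2 k| ^ (pF + 1) := by positivity
  unfold dissipation
  nlinarith

lemma mul_abs_rpow_le_dissipation_right (hDl : 0 ≤ Dl) (hDr : 0 ≤ Dr) (x : PhaseSpace n)
    (k : Fin n) : Dr * |x.2.2 k| ^ (pF + 1) ≤ dissipation Dl Dr pF x := by
  have := Finset.single_le_sum (f := fun j => |x.2.2 j| ^ (pF + 1)) (fun _ _ => by positivity)
    (Finset.mem_univ k)
  have : 0 ≤ Dl * ∑ k, |x.2.1 k| ^ (pF + 1) := by positivity
  unfold dissipation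
  nlinarith

end System

namespace IsSolHomC1

variable {n : ℕ} {Ml Mr : Matrix (Fin n) (Fin n) ℝ} {Ks Dl Dr pU pF : ℝ}
  {e vl vr : ℝ → Fin n → ℝ}

lemma hasDerivAt_state (hsol : IsSolHomC1 n Ml Mr Ks Dl Dr pU pF e vl vr) {t : ℝ} (ht : 0 ≤ t) :
    HasDerivAt (fun s => (e s, vl s, vr s))
      (vectorFieldC1 Ml Mr Ks Dl Dr pU pF (e t, vl t, vr t)) t :=
  (hsol.1 t ht).prodMk ((hsol.2.1 t ht).prodMk (hsol.2.2 t ht))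

lemma hasDerivAt_lyapunovFn (hsol : IsSolHomC1 n Ml Mr Ks Dl Dr pU pF e vl vr)
    (hMl : IsUnit Ml.det) (hMr : IsUnit Mr.det) (hMl_symm : Mlᵀ = Ml) (hMr_symm : Mrᵀ = Mr)
    (hpU : 0 < pU) (hpF : 0 < pF) {t : ℝ} (ht : 0 ≤ t) :
    HasDerivAt (fun s => lyapunovFn Ml Mr Ks pU (e s, vl s, vr s))
      (-dissipation Dl Dr pF (e t, vl t, vr t)) t := by
  have hE := (hasDerivAt_sum_abs_rpow_add_one hpU (hsol.1 t ht)).const_mul (Ks / (pU + 1))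
  have hL := (hasDerivAt_dotProduct_mulVec_self hMl_symm (hsol.2.1 t ht)).const_mul (1 / 2 : ℝ)
  have hR := (hasDerivAt_dotProduct_mulVec_self hMr_symm (hsol.2.2 t ht)).const_mul (1 / 2 : ℝ)
  refine ((hE.add hL).add hR).congr_deriv ?_
  rw [mulVec_neg, mulVec_mulVec, mul_nonsing_inv _ hMl, one_mulVec, mulVec_neg, mulVec_mulVec,
    mul_nonsing_inv _ hMr, one_mulVec]
  simp only [dissipation, dotProduct, ← mul_spow (by linarith : pF + 1 ≠ 0), Finset.mul_sum,
    ← Finset.sum_neg_distrib, ← Finset.sum_add_distrib, Pi.sub_apply, Pi.neg_apply]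
  refine Finset.sum_congr rfl fun k _ => ?_
  field_simp
  ring

lemma antitoneOn_lyapunovFn (hsol : IsSolHomC1 n Ml Mr Ks Dl Dr pU pF e vl vr)
    (hMl : IsUnit Ml.det) (hMr : IsUnit Mr.det) (hMl_symm : Mlᵀ = Ml) (hMr_symm : Mrᵀ = Mr)
    (hDl : 0 < Dl) (hDr : 0 < Dr) (hpU : 0 < pU) (hpF : 0 < pF) :
    AntitoneOn (fun t => lyapunovFn Ml Mr Ks pU (e t, vl t, vr t)) (Ici 0) := by
  have hV := fun t (ht : 0 ≤ t) =>
    hsol.hasDerivAt_lyapunovFn hMl hMr hMl_symm hMr_symm hpU hpF ht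
  exact antitoneOn_of_hasDerivWithinAt_nonpos (convex_Ici 0)
    (fun t ht => (hV t ht).continuousAt.continuousWithinAt)
    (fun t ht => (hV t (interior_subset ht)).hasDerivWithinAt)
    fun t _ => neg_nonpos.2 (dissipation_nonneg hDl.le hDr.le _)

lemma uniformContinuousOn_comp (hsol : IsSolHomC1 n Ml Mr Ks Dl Dr pU pF e vl vr)
    (hMl : Ml.PosDef) (hMr : Mr.PosDef) (hMl_symm : Mlᵀ = Ml) (hMr_symm : Mrᵀ = Mr)
    (hKs : 0 < Ks) (hDl : 0 < Dl) (hDr : 0 < Dr) (hpU : 0 < pU) (hpF : 0 < pF)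
    {F : Type*} [PseudoMetricSpace F] {φ : PhaseSpace n → F} (hφ : Continuous φ) :
    UniformContinuousOn (fun t => φ (e t, vl t, vr t)) (Ici 0) := by
  set K := {x | lyapunovFn Ml Mr Ks pU x ≤ lyapunovFn Ml Mr Ks pU (e 0, vl 0, vr 0)}
  have hK : IsCompact K := isCompact_setOf_lyapunovFn_le hMl hMr hKs hpU _
  have hmaps : MapsTo (fun t => (e t, vl t, vr t)) (Ici 0) K := fun t ht =>
    hsol.antitoneOn_lyapunovFn hMl.det_pos.ne'.isUnit hMr.det_pos.ne'.isUnit hMl_symm hMr_symm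
      hDl hDr hpU hpF self_mem_Ici ht ht
  exact (hK.uniformContinuousOn_of_continuous hφ.continuousOn).comp
    (uniformContinuousOn_of_hasDerivAt_of_mapsTo (continuous_vectorFieldC1 hpU hpF) hK
      (fun t ht => hsol.hasDerivAt_state ht) hmaps) hmaps

lemma tendsto_dissipation (hsol : IsSolHomC1 n Ml Mr Ks Dl Dr pU pF e vl vr)
    (hMl : Ml.PosDef) (hMr : Mr.PosDef) (hMl_symm : Mlᵀ = Ml) (hMr_symm : Mrᵀ = Mr)
    (hKs : 0 < Ks) (hDl : 0 < Dl) (hDr : 0 < Dr) (hpU : 0 < pU) (hpF : 0 < pF) :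
    Tendsto (fun t => dissipation Dl Dr pF (e t, vl t, vr t)) atTop (𝓝 0) := by
  have hdet := hMl.det_pos.ne'.isUnit
  have hdet' := hMr.det_pos.ne'.isUnit
  obtain ⟨L, hL⟩ := (hsol.antitoneOn_lyapunovFn hdet hdet' hMl_symm hMr_symm hDl hDr hpU hpF
    ).exists_tendsto_atTop ⟨0, forall_mem_image.2 fun t _ => lyapunovFn_nonneg hMl hMr hKs hpU _⟩
  simpa using (tendsto_deriv_zero_of_tendsto
    (fun t ht => hsol.hasDerivAt_lyapunovFn hdet hdet' hMl_symm hMr_symm hpU hpF ht) hL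
    (hsol.uniformContinuousOn_comp hMl hMr hMl_symm hMr_symm hKs hDl hDr hpU hpF
      (continuous_dissipation hpF).neg)).neg

lemma tendsto_velocity (hsol : IsSolHomC1 n Ml Mr Ks Dl Dr pU pF e vl vr)
    (hMl : Ml.PosDef) (hMr : Mr.PosDef) (hMl_symm : Mlᵀ = Ml) (hMr_symm : Mrᵀ = Mr)
    (hKs : 0 < Ks) (hDl : 0 < Dl) (hDr : 0 < Dr) (hpU : 0 < pU) (hpF : 0 < pF) :
    Tendsto vl atTop (𝓝 0) ∧ Tendsto vr atTop (𝓝 0) := by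
  have hW := hsol.tendsto_dissipation hMl hMr hMl_symm hMr_symm hKs hDl hDr hpU hpF
  have hdominated : ∀ {D : ℝ} {v : ℝ → Fin n → ℝ}, 0 < D →
      (∀ t k, D * |v t k| ^ (pF + 1) ≤ dissipation Dl Dr pF (e t, vl t, vr t)) →
      Tendsto v atTop (𝓝 0) := fun {D v} hD hle =>
    tendsto_pi_nhds.2 fun k => tendsto_zero_of_tendsto_abs_rpow (by linarith : 0 < pF + 1) <| by
      simpa [hD.ne'] using
        (squeeze_zero (fun t => by positivity) (fun t => hle t k) hW).const_mul D⁻¹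
  exact ⟨hdominated hDl fun t => mul_abs_rpow_le_dissipation_left hDl.le hDr.le (e t, vl t, vr t),
    hdominated hDr fun t => mul_abs_rpow_le_dissipation_right hDl.le hDr.le (e t, vl t, vr t)⟩

lemma tendsto_error (hsol : IsSolHomC1 n Ml Mr Ks Dl Dr pU pF e vl vr)
    (hMl : Ml.PosDef) (hMr : Mr.PosDef) (hMl_symm : Mlᵀ = Ml) (hMr_symm : Mrᵀ = Mr)
    (hKs : 0 < Ks) (hDl : 0 < Dl) (hDr : 0 < Dr) (hpU : 0 < pU) (hpF : 0 < pF) :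
    Tendsto e atTop (𝓝 0) := by
  have hvl := (hsol.tendsto_velocity hMl hMr hMl_symm hMr_symm hKs hDl hDr hpU hpF).1
  have hmomentum : Tendsto (fun t => Ml *ᵥ vl t) atTop (𝓝 0) :=
    ((continuous_const.matrix_mulVec continuous_id).tendsto' 0 0 (mulVec_zero Ml)).comp hvl
  have hderiv : ∀ t, 0 ≤ t → HasDerivAt (fun s => Ml *ᵥ vl s)
      (-forceL Ks Dl pU pF (e t, vl t, vr t)) t := fun t ht => by
    have := (hsol.2.1 t ht).matrix_mulVec Ml
    rwa [mulVec_neg, mulVec_mulVec, mul_nonsing_inv _ hMl.det_pos.ne'.isUnit, one_mulVec] at this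
  have hforce : Tendsto (fun t => forceL Ks Dl pU pF (e t, vl t, vr t)) atTop (𝓝 0) := by
    simpa using (tendsto_deriv_zero_of_tendsto hderiv hmomentum
      (hsol.uniformContinuousOn_comp hMl hMr hMl_symm hMr_symm hKs hDl hDr hpU hpF
        (continuous_forceL hpU hpF).neg)).neg
  refine tendsto_pi_nhds.2 fun k => tendsto_zero_of_tendsto_spow hpU ?_
  have hspF : Tendsto (fun t => spow pF (vl t k)) atTop (𝓝 0) :=
    ((continuous_spow hpF).tendsto' 0 0 (spow_zero pF)).comp (tendsto_pi_nhds.1 hvl k)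
  simpa [forceL, hKs.ne'] using
    ((tendsto_pi_nhds.1 hforce k).sub (hspF.const_mul Dl)).const_mul Ks⁻¹

end IsSolHomC1

theorem stmt16 (n : ℕ) (Ml Mr : Matrix (Fin n) (Fin n) ℝ)
    (hMl : Ml.PosDef) (hMr : Mr.PosDef)
    (hMl_symm : Mlᵀ = Ml) (hMr_symm : Mrᵀ = Mr)
    (Ks Dl Dr : ℝ) (hKs : 0 < Ks) (hDl : 0 < Dl) (hDr : 0 < Dr)
    (r1 r2 : ℝ) (hr2 : 0 < r2) (hr12 : r2 < r1) (hr1 : r1 < 2 * r2)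
    (pU pF : ℝ) (hpU : pU = (2 * r2 - r1) / r1) (hpF : pF = (2 * r2 - r1) / r2) :
    -- Lyapunov stability of the origin
    (∀ ε : ℝ, 0 < ε → ∃ δ : ℝ, 0 < δ ∧
      ∀ e vl vr : ℝ → (Fin n → ℝ),
        IsSolHomC1 n Ml Mr Ks Dl Dr pU pF e vl vr →
        ‖(e 0, vl 0, vr 0)‖ < δ → ∀ t : ℝ, 0 ≤ t → ‖(e t, vl t, vr t)‖ < ε) ∧
    -- along every solution, V is nonincreasing and the solution converges to 0
    (∀ e vl vr : ℝ → (Fin n → ℝ),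
      IsSolHomC1 n Ml Mr Ks Dl Dr pU pF e vl vr →
      ((∀ s t : ℝ, 0 ≤ s → s ≤ t →
        (Ks / (pU + 1)) * (∑ k, |e t k| ^ (pU + 1))
            + (1 / 2 : ℝ) * (vl t ⬝ᵥ (Ml *ᵥ vl t)) + (1 / 2 : ℝ) * (vr t ⬝ᵥ (Mr *ᵥ vr t))
          ≤ (Ks / (pU + 1)) * (∑ k, |e s k| ^ (pU + 1))
            + (1 / 2 : ℝ) * (vl s ⬝ᵥ (Ml *ᵥ vl s)) + (1 / 2 : ℝ) * (vr s ⬝ᵥ (Mr *ᵥ vr s))) ∧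
       Filter.Tendsto (fun t => (e t, vl t, vr t)) Filter.atTop
         (nhds (0, 0, 0)))) := by
  have hpU0 : 0 < pU := hpU ▸ div_pos (by linarith) (by linarith)
  have hpF0 : 0 < pF := hpF ▸ div_pos (by linarith) hr2
  have hdetl := hMl.det_pos.ne'.isUnit
  have hdetr := hMr.det_pos.ne'.isUnit
  refine ⟨fun ε hε => ?_, fun e vl vr hsol => ⟨fun s t hs hst => ?_, ?_⟩⟩
  · obtain ⟨δ, hδ, hstable⟩ := lyapunov_stable (continuous_lyapunovFn hpU0)
      (lyapunovFn_zero hpU0) (fun x hx => lyapunovFn_pos hMl hMr hKs hpU0 hx) hε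
    refine ⟨δ, hδ, fun e vl vr hsol => hstable (fun t => (e t, vl t, vr t))
      (fun t ht => (hsol.hasDerivAt_state ht).continuousAt.continuousWithinAt)
      (hsol.antitoneOn_lyapunovFn hdetl hdetr hMl_symm hMr_symm hDl hDr hpU0 hpF0)⟩
  · exact hsol.antitoneOn_lyapunovFn hdetl hdetr hMl_symm hMr_symm hDl hDr hpU0 hpF0
      hs (hs.trans hst) hst
  · obtain ⟨hvl, hvr⟩ := hsol.tendsto_velocity hMl hMr hMl_symm hMr_symm hKs hDl hDr hpU0 hpF0
    exact (hsol.tendsto_error hMl hMr hMl_symm hMr_symm hKs hDl hDr hpU0 hpF0).prodMk_nhds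
      (hvl.prodMk_nhds hvr)
end
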